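/- arXiv:2108.02677 — 2 statements merged into one kernel-verified Lean document; each statement's English description precedes it below -/
import Mathlib

section
/- In the theory M⁻ (Extensionality, Emptyset, Pair, Union, Set difference, TCo, Infinity, Δ0-Separation, Set-foundation), the scheme of Σ-Foundation on ω for a class of formulas follows from Foundation on ω for the dual Π class, given Δ0^P-Collection; concretely in a model-theoretic form: if M is a model of M⁻ + Δ0^P-Collection in which every nonempty Π1^P-definable (with parameters) subclass of ω^M has an E-least element, then every nonempty Σ1^P-definable (with parameters) subclass of ω^M has an E-least element. -/
universe u

/-- de Bruijn-style formulas of the language of set theory, with primitive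
bounded quantifiers (`∈`-bounded and `⊆`-bounded) and unbounded quantifiers.
`SF n` is the type of formulas with (at most) `n` free variables. -/
inductive SF : ℕ → Type
  | mem {n} (i j : Fin n) : SF n
  | eq {n} (i j : Fin n) : SF n
  | not {n} (φ : SF n) : SF n
  | and {n} (φ ψ : SF n) : SF n
  | or {n} (φ ψ : SF n) : SF n
  | bexMem {n} (i : Fin n) (φ : SF (n + 1)) : SF n
  | ballMem {n} (i : Fin n) (φ : SF (n + 1)) : SF n
  | bexSub {n} (i : Fin n) (φ : SF (n + 1)) : SF n
  | ballSub {n} (i : Fin n) (φ : SF (n + 1)) : SF n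
  | ex {n} (φ : SF (n + 1)) : SF n
  | all {n} (φ : SF (n + 1)) : SF n

variable {X : Type u}

/-- `a ⊆ b` in the structure `⟨X, E⟩`. -/
def SubE (E : X → X → Prop) (a b : X) : Prop := ∀ z, E z a → E z b

/-- Satisfaction of a formula in the structure `⟨X, E⟩` under a valuation. -/
def SF.Eval (E : X → X → Prop) : {n : ℕ} → SF n → (Fin n → X) → Prop
  | _, .mem i j, v => E (v i) (v j)
  | _, .eq i j, v => v i = v j
  | _, .not φ, v => ¬ φ.Eval E v
  | _, .and φ ψ, v => φ.Eval E v ∧ ψ.Eval E v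
  | _, .or φ ψ, v => φ.Eval E v ∨ ψ.Eval E v
  | _, .bexMem i φ, v => ∃ x, E x (v i) ∧ φ.Eval E (Fin.snoc v x)
  | _, .ballMem i φ, v => ∀ x, E x (v i) → φ.Eval E (Fin.snoc v x)
  | _, .bexSub i φ, v => ∃ x, SubE E x (v i) ∧ φ.Eval E (Fin.snoc v x)
  | _, .ballSub i φ, v => ∀ x, SubE E x (v i) → φ.Eval E (Fin.snoc v x)
  | _, .ex φ, v => ∃ x, φ.Eval E (Fin.snoc v x)
  | _, .all φ, v => ∀ x, φ.Eval E (Fin.snoc v x)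

/-- `Δ₀` formulas: only `∈`-bounded quantifiers. -/
def SF.IsDelta0 : {n : ℕ} → SF n → Prop
  | _, .mem _ _ => True
  | _, .eq _ _ => True
  | _, .not φ => φ.IsDelta0
  | _, .and φ ψ => φ.IsDelta0 ∧ ψ.IsDelta0
  | _, .or φ ψ => φ.IsDelta0 ∧ ψ.IsDelta0
  | _, .bexMem _ φ => φ.IsDelta0
  | _, .ballMem _ φ => φ.IsDelta0
  | _, .bexSub _ _ => False
  | _, .ballSub _ _ => False
  | _, .ex _ => False
  | _, .all _ => False

/-- Takahashi's class `Δ₀^𝒫`: only `∈`-bounded and `⊆`-bounded quantifiers. -/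
def SF.IsDelta0P : {n : ℕ} → SF n → Prop
  | _, .mem _ _ => True
  | _, .eq _ _ => True
  | _, .not φ => φ.IsDelta0P
  | _, .and φ ψ => φ.IsDelta0P ∧ ψ.IsDelta0P
  | _, .or φ ψ => φ.IsDelta0P ∧ ψ.IsDelta0P
  | _, .bexMem _ φ => φ.IsDelta0P
  | _, .ballMem _ φ => φ.IsDelta0P
  | _, .bexSub _ φ => φ.IsDelta0P
  | _, .ballSub _ φ => φ.IsDelta0P
  | _, .ex _ => False
  | _, .all _ => False

def Delta0C : ∀ n, SF n → Prop := fun _ φ => φ.IsDelta0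
def Delta0PC : ∀ n, SF n → Prop := fun _ φ => φ.IsDelta0P
def Sigma1C : ∀ n, SF n → Prop := fun _ φ => ∃ ψ, ψ.IsDelta0 ∧ φ = SF.ex ψ
def Pi1C : ∀ n, SF n → Prop := fun _ φ => ∃ ψ, ψ.IsDelta0 ∧ φ = SF.all ψ
def Sigma1PC : ∀ n, SF n → Prop := fun _ φ => ∃ ψ, ψ.IsDelta0P ∧ φ = SF.ex ψ
def Pi1PC : ∀ n, SF n → Prop := fun _ φ => ∃ ψ, ψ.IsDelta0P ∧ φ = SF.all ψ
def FullC : ∀ n, SF n → Prop := fun _ _ => True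

/-- A Gödel numbering of formulas. -/
def SF.encode : {n : ℕ} → SF n → ℕ
  | _, .mem i j => Nat.pair 0 (Nat.pair i.val j.val)
  | _, .eq i j => Nat.pair 1 (Nat.pair i.val j.val)
  | _, .not φ => Nat.pair 2 φ.encode
  | _, .and φ ψ => Nat.pair 3 (Nat.pair φ.encode ψ.encode)
  | _, .or φ ψ => Nat.pair 4 (Nat.pair φ.encode ψ.encode)
  | _, .bexMem i φ => Nat.pair 5 (Nat.pair i.val φ.encode)
  | _, .ballMem i φ => Nat.pair 6 (Nat.pair i.val φ.encode)
  | _, .bexSub i φ => Nat.pair 7 (Nat.pair i.val φ.encode)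
  | _, .ballSub i φ => Nat.pair 8 (Nat.pair i.val φ.encode)
  | _, .ex φ => Nat.pair 9 φ.encode
  | _, .all φ => Nat.pair 10 φ.encode

/-- A theory (set of sentences) is recursively enumerable if the set of Gödel
numbers of its members is the domain of a partial recursive function. -/
def REset (S : Set (SF 0)) : Prop :=
  ∃ f : ℕ →. ℕ, Nat.Partrec f ∧ ∀ φ : SF 0, φ ∈ S ↔ SF.encode φ ∈ f.Dom

/-- `⟨X, E⟩ ⊨ S` for a set `S` of sentences. -/
def SatT (E : X → X → Prop) (S : Set (SF 0)) : Prop :=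
  ∀ φ ∈ S, SF.Eval E φ (fun i => i.elim0)

/-! ## Axioms and axiom schemes -/

def ExtensionalityAx (E : X → X → Prop) : Prop := ∀ a b, (∀ z, E z a ↔ E z b) → a = b
def EmptySetAx (E : X → X → Prop) : Prop := ∃ a, ∀ z, ¬ E z a
def PairAx (E : X → X → Prop) : Prop := ∀ x y, ∃ a, ∀ z, E z a ↔ (z = x ∨ z = y)
def UnionAx (E : X → X → Prop) : Prop := ∀ a, ∃ b, ∀ z, E z b ↔ ∃ y, E y a ∧ E z y
def SetDiffAx (E : X → X → Prop) : Prop := ∀ a b, ∃ c, ∀ z, E z c ↔ (E z a ∧ ¬ E z b)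
def PowerAx (E : X → X → Prop) : Prop := ∀ a, ∃ p, ∀ z, E z p ↔ SubE E z a
def TransSet (E : X → X → Prop) (t : X) : Prop := ∀ y, E y t → ∀ z, E z y → E z t
def TCoAx (E : X → X → Prop) : Prop := ∀ a, ∃ t, TransSet E t ∧ SubE E a t
def SuccOf (E : X → X → Prop) (x s : X) : Prop := ∀ z, E z s ↔ (E z x ∨ z = x)
def InductiveSet (E : X → X → Prop) (a : X) : Prop :=
  (∃ e, E e a ∧ ∀ z, ¬ E z e) ∧ ∀ x, E x a → ∃ s, E s a ∧ SuccOf E x s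
def InfinityAx (E : X → X → Prop) : Prop := ∃ a, InductiveSet E a
def SetFoundationAx (E : X → X → Prop) : Prop :=
  ∀ z, (∃ x, E x z) → ∃ y, E y z ∧ ∀ x, E x y → ¬ E x z
/-- The axiom of choice: every set of pairwise disjoint nonempty sets has a transversal. -/
def ACAx (E : X → X → Prop) : Prop :=
  ∀ a, (∀ x, E x a → ∃ z, E z x) →
    (∀ x y, E x a → E y a → x ≠ y → ∀ z, E z x → ¬ E z y) →
    ∃ c, ∀ x, E x a → ∃! z, E z c ∧ E z x

def SeparationScheme (E : X → X → Prop) (C : ∀ n, SF n → Prop) : Prop :=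
  ∀ (n : ℕ) (φ : SF (n + 1)), C _ φ → ∀ (p : Fin n → X) (w : X),
    ∃ y, ∀ x, E x y ↔ (E x w ∧ φ.Eval E (Fin.snoc p x))

def CollectionScheme (E : X → X → Prop) (C : ∀ n, SF n → Prop) : Prop :=
  ∀ (n : ℕ) (φ : SF (n + 2)), C _ φ → ∀ (p : Fin n → X) (w : X),
    (∀ x, E x w → ∃ y, φ.Eval E (Fin.snoc (Fin.snoc p x) y)) →
    ∃ c, ∀ x, E x w → ∃ y, E y c ∧ φ.Eval E (Fin.snoc (Fin.snoc p x) y)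

def FoundationScheme (E : X → X → Prop) (C : ∀ n, SF n → Prop) : Prop :=
  ∀ (n : ℕ) (φ : SF (n + 1)), C _ φ → ∀ p : Fin n → X,
    (∃ x, φ.Eval E (Fin.snoc p x)) →
    ∃ y, φ.Eval E (Fin.snoc p y) ∧ ∀ x, E x y → ¬ φ.Eval E (Fin.snoc p x)

/-! ## Theories -/

def ModelMminus (E : X → X → Prop) : Prop :=
  ExtensionalityAx E ∧ EmptySetAx E ∧ PairAx E ∧ UnionAx E ∧ SetDiffAx E ∧
    TCoAx E ∧ InfinityAx E ∧ SeparationScheme E Delta0C ∧ SetFoundationAx E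

def ModelM (E : X → X → Prop) : Prop := ModelMminus E ∧ PowerAx E

def ModelKP (E : X → X → Prop) : Prop :=
  ExtensionalityAx E ∧ PairAx E ∧ UnionAx E ∧ SeparationScheme E Delta0C ∧
    CollectionScheme E Delta0C ∧ FoundationScheme E Pi1C

def ModelKPP (E : X → X → Prop) : Prop :=
  ModelM E ∧ CollectionScheme E Delta0PC ∧ FoundationScheme E Pi1PC

def ModelMOST (E : X → X → Prop) : Prop :=
  ModelM E ∧ SeparationScheme E Sigma1C ∧ ACAx E

def ModelZF (E : X → X → Prop) : Prop :=
  ExtensionalityAx E ∧ EmptySetAx E ∧ PairAx E ∧ UnionAx E ∧ PowerAx E ∧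
    InfinityAx E ∧ SeparationScheme E FullC ∧ CollectionScheme E FullC ∧
    FoundationScheme E FullC

/-! ## Internal set-theoretic machinery -/

/-- `p = {{x}, {x, y}}` (Kuratowski pair). -/
def IsPair (E : X → X → Prop) (p x y : X) : Prop :=
  ∀ z, E z p ↔ ((∀ w, E w z ↔ w = x) ∨ (∀ w, E w z ↔ (w = x ∨ w = y)))

def FunApp (E : X → X → Prop) (f x y : X) : Prop := ∃ q, E q f ∧ IsPair E q x y

/-- `f` is a function with domain `d`. -/
def IsFuncOn (E : X → X → Prop) (f d : X) : Prop :=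
  (∀ q, E q f → ∃ x y, IsPair E q x y ∧ E x d) ∧
  (∀ x y y', FunApp E f x y → FunApp E f x y' → y = y') ∧
  (∀ x, E x d → ∃ y, FunApp E f x y)

/-- `f` is an injective function from `dom` into `cod`. -/
def InjFunInto (E : X → X → Prop) (f dom cod : X) : Prop :=
  IsFuncOn E f dom ∧ (∀ x y, FunApp E f x y → E y cod) ∧
  (∀ x x' y, FunApp E f x y → FunApp E f x' y → x = x')

/-- `|t| ≤ |κ|`. -/
def CardLe (E : X → X → Prop) (t κ : X) : Prop := ∃ f, InjFunInto E f t κ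

def IsOrdinal (E : X → X → Prop) (x : X) : Prop :=
  TransSet E x ∧ ∀ y, E y x → TransSet E y

/-- An (initial ordinal =) cardinal: an ordinal that does not inject into any of
its members. -/
def IsCardinal (E : X → X → Prop) (κ : X) : Prop :=
  IsOrdinal E κ ∧ ∀ β, E β κ → ¬ CardLe E κ β

/-- `t` is the transitive closure of the set `x`. -/
def IsTCset (E : X → X → Prop) (t x : X) : Prop :=
  TransSet E t ∧ SubE E x t ∧ ∀ u, TransSet E u → SubE E x u → SubE E t u

/-- `t` is the transitive closure of `{x}`. -/
def IsTCsingleton (E : X → X → Prop) (t x : X) : Prop :=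
  TransSet E t ∧ E x t ∧ ∀ u, TransSet E u → E x u → SubE E t u

def IsOmega (E : X → X → Prop) (w : X) : Prop :=
  InductiveSet E w ∧ ∀ a, InductiveSet E a → SubE E w a

/-- `⟨X, E⟩` is `ω`-standard: its internal natural numbers are order-isomorphic
to the standard natural numbers. -/
def OmegaStandard (E : X → X → Prop) : Prop :=
  ∀ w, IsOmega E w → ∃ f : ℕ → X, (∀ n, E (f n) w) ∧ (∀ x, E x w → ∃ n, x = f n) ∧
    ∀ m n : ℕ, (E (f m) (f n) ↔ m < n)

/-- `f` is (a function coding) the cumulative hierarchy `β ↦ V_β` for `β ∈ α`,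
using `V_β = ⋃_{γ∈β} 𝒫(V_γ)`. -/
def IsRK (E : X → X → Prop) (α f : X) : Prop :=
  IsOrdinal E α ∧ IsFuncOn E f α ∧
  ∀ β vβ, E β α → FunApp E f β vβ →
    ∀ x, E x vβ ↔ ∃ γ, E γ β ∧ ∃ vγ, FunApp E f γ vγ ∧ SubE E x vγ

/-- Internal rank comparison `ρ(x) ≤ ρ(y)`: `x` belongs to every stage of the
cumulative hierarchy that `y` belongs to. -/
def RankLe (E : X → X → Prop) (x y : X) : Prop :=
  ∀ α f β v, IsRK E α f → E β α → FunApp E f β v → E y v → E x v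

/-- External `n`-th von Neumann natural number. -/
def IsVN (E : X → X → Prop) : ℕ → X → Prop
  | 0, x => ∀ z, ¬ E z x
  | (n + 1), x => ∃ y, IsVN E n y ∧ SuccOf E y x

/-- `a` is the `n`-th infinite cardinal `ℵ_n` (for external `n`, as computed in
the model): `ℵ₀ = ω`, and `ℵ_{n+1}` is the least cardinal above `ℵ_n`. -/
def IsAleph (E : X → X → Prop) : ℕ → X → Prop
  | 0, a => IsOmega E a
  | (n + 1), a => ∃ b, IsAleph E n b ∧ IsCardinal E a ∧ E b a ∧
      ∀ c, IsCardinal E c → E b c → (c = a ∨ E a c)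

/-- `a` is the cardinal `ℵ_ω` of the model: the least limit cardinal above `ω`. -/
def IsAlephOmega (E : X → X → Prop) (a : X) : Prop :=
  (IsCardinal E a ∧ (∃ w, IsOmega E w ∧ E w a) ∧
    (∀ β, E β a → ∃ μ, IsCardinal E μ ∧ E β μ ∧ E μ a)) ∧
  ∀ a', (IsCardinal E a' ∧ (∃ w, IsOmega E w ∧ E w a') ∧
    (∀ β, E β a' → ∃ μ, IsCardinal E μ ∧ E β μ ∧ E μ a')) → (a = a' ∨ E a a')

/-! ## Internal satisfaction and the constructible hierarchy (for `V = L`) -/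

/-- `c = ⟨n, a⟩` with the tag `n` an external natural (internally coded). -/
def TaggedBy (E : X → X → Prop) (c : X) (n : ℕ) (a : X) : Prop :=
  ∃ t, IsVN E n t ∧ IsPair E c t a

def CodeMem (E : X → X → Prop) (c i j : X) : Prop := ∃ p, IsPair E p i j ∧ TaggedBy E c 0 p
def CodeEq (E : X → X → Prop) (c i j : X) : Prop := ∃ p, IsPair E p i j ∧ TaggedBy E c 1 p
def CodeNot (E : X → X → Prop) (c' c : X) : Prop := TaggedBy E c' 2 c
def CodeAnd (E : X → X → Prop) (c' c₁ c₂ : X) : Prop := ∃ p, IsPair E p c₁ c₂ ∧ TaggedBy E c' 3 p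
def CodeEx (E : X → X → Prop) (c' i c : X) : Prop := ∃ p, IsPair E p i c ∧ TaggedBy E c' 4 p

/-- `d` is closed under the internal formation rules for codes of formulas with
variables indexed by elements of `w` (the internal `ω`). -/
def ClosedCode (E : X → X → Prop) (w d : X) : Prop :=
  (∀ i j c, E i w → E j w → CodeMem E c i j → E c d) ∧
  (∀ i j c, E i w → E j w → CodeEq E c i j → E c d) ∧
  (∀ c c', E c d → CodeNot E c' c → E c' d) ∧
  (∀ c₁ c₂ c', E c₁ d → E c₂ d → CodeAnd E c' c₁ c₂ → E c' d) ∧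
  (∀ i c c', E i w → E c d → CodeEx E c' i c → E c' d)

/-- `c` is an internal code of a first-order formula of the language of set theory. -/
def FormCode (E : X → X → Prop) (w c : X) : Prop := ∀ d, ClosedCode E w d → E c d

/-- An internal assignment of elements of `a` to the variables. -/
def IsAssign (E : X → X → Prop) (w a v : X) : Prop :=
  IsFuncOn E v w ∧ ∀ i y, FunApp E v i y → E y a

/-- `v' = v[i ↦ x]`. -/
def UpdateAssign (E : X → X → Prop) (w v : X) (i x v' : X) : Prop :=
  FunApp E v' i x ∧ ∀ j, E j w → j ≠ i → ∀ y, (FunApp E v j y ↔ FunApp E v' j y)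

def PairIn (E : X → X → Prop) (s c v : X) : Prop := ∃ q, E q s ∧ IsPair E q c v

/-- `s` is a (full) satisfaction class for the set structure `⟨a, E⟩`: a set of
pairs ⟨code, assignment⟩ obeying the Tarski conditions. -/
def SatSet (E : X → X → Prop) (w a s : X) : Prop :=
  (∀ q, E q s → ∃ c v, IsPair E q c v ∧ FormCode E w c ∧ IsAssign E w a v) ∧
  (∀ i j c v xi xj, E i w → E j w → CodeMem E c i j → IsAssign E w a v →
    FunApp E v i xi → FunApp E v j xj → (PairIn E s c v ↔ E xi xj)) ∧
  (∀ i j c v xi xj, E i w → E j w → CodeEq E c i j → IsAssign E w a v →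
    FunApp E v i xi → FunApp E v j xj → (PairIn E s c v ↔ xi = xj)) ∧
  (∀ c c' v, FormCode E w c → CodeNot E c' c → IsAssign E w a v →
    (PairIn E s c' v ↔ ¬ PairIn E s c v)) ∧
  (∀ c₁ c₂ c' v, FormCode E w c₁ → FormCode E w c₂ → CodeAnd E c' c₁ c₂ →
    IsAssign E w a v → (PairIn E s c' v ↔ (PairIn E s c₁ v ∧ PairIn E s c₂ v))) ∧
  (∀ i c c' v, E i w → FormCode E w c → CodeEx E c' i c → IsAssign E w a v →
    (PairIn E s c' v ↔ ∃ x v', E x a ∧ IsAssign E w a v' ∧ UpdateAssign E w v i x v' ∧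
      PairIn E s c v'))

/-- `b` is a subset of `a` definable over `⟨a, E⟩` (with parameters from `a`). -/
def DefSub (E : X → X → Prop) (w a s b : X) : Prop :=
  SubE E b a ∧ ∃ c, FormCode E w c ∧ ∃ v, IsAssign E w a v ∧ ∃ i, E i w ∧
    ∀ x, E x b ↔ (E x a ∧ ∃ v', IsAssign E w a v' ∧ UpdateAssign E w v i x v' ∧
      PairIn E s c v')

/-- `f` codes the constructible hierarchy `β ↦ L_β` for `β ∈ α`, using
`L_β = ⋃_{γ∈β} Def(L_γ)`. -/
def IsLHier (E : X → X → Prop) (w f α : X) : Prop :=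
  IsOrdinal E α ∧ IsFuncOn E f α ∧
  ∀ β vβ, E β α → FunApp E f β vβ →
    ∀ x, E x vβ ↔ ∃ γ, E γ β ∧ ∃ vγ, FunApp E f γ vγ ∧ ∃ s, SatSet E w vγ s ∧
      DefSub E w vγ s x

/-- The axiom `V = L`: every set belongs to some level of the constructible hierarchy. -/
def VeqL (E : X → X → Prop) : Prop :=
  ∀ w, IsOmega E w → ∀ x, ∃ α f β vβ, IsLHier E w f α ∧ E β α ∧ FunApp E f β vβ ∧ E x vβ

/-! ## Extensions -/

/-- The substructure of `⟨X, E⟩` with underlying set `A`. -/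
def restrict (E : X → X → Prop) (A : Set X) : A → A → Prop := fun a b => E a.1 b.1

/-- `B` is an end extension of `A` (both substructures of an ambient `⟨X, E⟩`). -/
def EndExtIn (E : X → X → Prop) (A B : Set X) : Prop :=
  A ⊆ B ∧ ∀ x y, x ∈ B → y ∈ A → E x y → x ∈ A

/-- `B` is a powerset-preserving end extension of `A` (within an ambient `⟨X, E⟩`);
`x ⊆ y` is computed in `B`. -/
def PowExtIn (E : X → X → Prop) (A B : Set X) : Prop :=
  EndExtIn E A B ∧ ∀ x y, x ∈ B → y ∈ A → (∀ z, z ∈ B → E z x → E z y) → x ∈ A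

/-- The whole structure `⟨X, E⟩` is an end extension of its substructure on `A`. -/
def EndExtSet (E : X → X → Prop) (A : Set X) : Prop :=
  ∀ x y, y ∈ A → E x y → x ∈ A

/-- `⟨X, E⟩` is a powerset-preserving end extension of its substructure on `A`. -/
def PowExtSet (E : X → X → Prop) (A : Set X) : Prop :=
  EndExtSet E A ∧ ∀ x y, y ∈ A → SubE E x y → x ∈ A

/-- `⟨X, E⟩` is a rank extension of its substructure on `A`. -/
def RankExtSet (E : X → X → Prop) (A : Set X) : Prop :=
  PowExtSet E A ∧ ∀ x y, y ∈ A → RankLe E x y → x ∈ A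

/-- The extension `⟨X, E⟩` of its substructure on `A` is proper and topless. -/
def ToplessSet (E : X → X → Prop) (A : Set X) : Prop :=
  A ≠ Set.univ ∧ ∀ c, (∀ x, E x c → x ∈ A) → c ∈ A

/-- The extension `⟨X, E⟩` of its substructure on `A` is proper and blunt (not topless). -/
def BluntSet (E : X → X → Prop) (A : Set X) : Prop :=
  A ≠ Set.univ ∧ ¬ ToplessSet E A

/-! ## Weak dependent choice -/

/-- `δ_ω^φ(b, f, p)`: `f` is a function on `ω` with `f(0) = {b}` tracing the
`φ`-successor relation. -/
def IsWDCWitness (E : X → X → Prop) {n : ℕ} (φ : SF (n + 2)) (p : Fin n → X)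
    (w b f : X) : Prop :=
  IsFuncOn E f w ∧
  (∃ z v, (∀ u, ¬ E u z) ∧ E z w ∧ FunApp E f z v ∧ ∀ t, E t v ↔ t = b) ∧
  ∀ m m' vm vm', E m w → SuccOf E m m' → E m' w → FunApp E f m vm → FunApp E f m' vm' →
    ((∀ x, E x vm → ∃ y, E y vm' ∧ φ.Eval E (Fin.snoc (Fin.snoc p x) y)) ∧
     (∀ y, E y vm' → ∀ x, E x vm → φ.Eval E (Fin.snoc (Fin.snoc p x) y)))

/-- The scheme `Δ₀^𝒫-WDC_ω`. -/
def WDComega (E : X → X → Prop) : Prop :=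
  ∀ (n : ℕ) (φ : SF (n + 2)), Delta0PC _ φ → ∀ p : Fin n → X,
    (∀ x, ∃ y, φ.Eval E (Fin.snoc (Fin.snoc p x) y)) →
    ∀ w, IsOmega E w → ∀ b, ∃ f, IsWDCWitness E φ p w b f

/-! ## Internal well-founded extensional relations (for `H_{≤κ}`) -/

def RRel (E : X → X → Prop) (R a b : X) : Prop := ∃ p, E p R ∧ IsPair E p a b

def RelOn (E : X → X → Prop) (R k : X) : Prop :=
  ∀ p, E p R → ∃ a b, IsPair E p a b ∧ E a k ∧ E b k

/-- `BFEXT(R, k)`: `R ⊆ k × k` is extensional on `k`, has a top element, and every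
nonempty subset of `k` has an `R`-minimal element. -/
def BFEXT (E : X → X → Prop) (R k : X) : Prop :=
  RelOn E R k ∧
  (∀ a b, E a k → E b k → (∀ c, E c k → (RRel E R c a ↔ RRel E R c b)) → a = b) ∧
  (∃ t, E t k ∧ ∀ b, E b k → b ≠ t → RRel E R b t) ∧
  (∀ S, SubE E S k → (∃ z, E z S) → ∃ m, E m S ∧ ∀ y, E y S → ¬ RRel E R y m)

/-- `f` is an isomorphism of `⟨k, R⟩` with `⟨T, ∈⟩`. -/
def IsoOnto (E : X → X → Prop) (R k f T : X) : Prop :=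
  IsFuncOn E f k ∧ (∀ x y, FunApp E f x y → E y T) ∧
  (∀ y, E y T → ∃ x, E x k ∧ FunApp E f x y) ∧
  (∀ x x' y, FunApp E f x y → FunApp E f x' y → x = x') ∧
  ∀ a b ya yb, E a k → E b k → FunApp E f a ya → FunApp E f b yb →
    (RRel E R a b ↔ E ya yb)

/-- The predicate `Xv = H_{≤κ} = {x : |TC(x)| ≤ κ}`. -/
def HleqPred (E : X → X → Prop) (Xv κ : X) : Prop :=
  IsCardinal E κ ∧ ∀ x, E x Xv ↔ ∃ t, IsTCset E t x ∧ CardLe E t κ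

/-- The explicit conjunction (i) ∧ (ii) ∧ (iii) asserting `Xv = H_{≤κ}`. -/
def ExplicitH (E : X → X → Prop) (Xv κ : X) : Prop :=
  IsCardinal E κ ∧
  (∀ R, BFEXT E R κ → ∃ x f T, E x Xv ∧ E f Xv ∧ E T Xv ∧ IsTCsingleton E T x ∧
    IsoOnto E R κ f T) ∧
  (∀ x, E x Xv → ∃ T f, E T Xv ∧ E f Xv ∧ IsTCsingleton E T x ∧ InjFunInto E f T κ)

/-!
Suppose `a ∈ ω` satisfies `∃ z, ψ(a, z)` but no least element of `ω` does. Call `y ∈ ω`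
witnessed if `ψ(x, z)` holds for some `z` and some `x ≤ y`; every witnessed `y` then has a
witnessed predecessor. Applying `Π₁^𝒫`-foundation to the least length for which none exists
gives, for every `m ∈ ω`, a witnessed countdown `a, a - 1, …` of length `m`, and any two
countdowns agree where both are defined. `Δ₀^𝒫`-collection gathers countdowns of all lengths
into one set, and `Δ₀`-separation forms the set of their last values. That set has no
`∈`-minimal element: if `b` ends a countdown of length `m`, the countdown of length `m + 1` ends
with the predecessor of `b`.
-/

namespace SF

variable {E : X → X → Prop}

def liftRenaming {n m : ℕ} (ρ : Fin n → Fin m) : Fin (n + 1) → Fin (m + 1) :=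
  Fin.snoc (fun i => (ρ i).castSucc) (Fin.last m)

def rename : {n m : ℕ} → (Fin n → Fin m) → SF n → SF m
  | _, _, ρ, .mem i j => .mem (ρ i) (ρ j)
  | _, _, ρ, .eq i j => .eq (ρ i) (ρ j)
  | _, _, ρ, .not φ => .not (φ.rename ρ)
  | _, _, ρ, .and φ ψ => .and (φ.rename ρ) (ψ.rename ρ)
  | _, _, ρ, .or φ ψ => .or (φ.rename ρ) (ψ.rename ρ)
  | _, _, ρ, .bexMem i φ => .bexMem (ρ i) (φ.rename (liftRenaming ρ))
  | _, _, ρ, .ballMem i φ => .ballMem (ρ i) (φ.rename (liftRenaming ρ))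
  | _, _, ρ, .bexSub i φ => .bexSub (ρ i) (φ.rename (liftRenaming ρ))
  | _, _, ρ, .ballSub i φ => .ballSub (ρ i) (φ.rename (liftRenaming ρ))
  | _, _, ρ, .ex φ => .ex (φ.rename (liftRenaming ρ))
  | _, _, ρ, .all φ => .all (φ.rename (liftRenaming ρ))

theorem snoc_comp_liftRenaming {n m : ℕ} (ρ : Fin n → Fin m) (v : Fin m → X) (x : X) :
    Fin.snoc v x ∘ liftRenaming ρ = Fin.snoc (v ∘ ρ) x := by
  funext i
  induction i using Fin.lastCases <;> simp [liftRenaming]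

theorem eval_rename {n m : ℕ} (φ : SF n) (ρ : Fin n → Fin m) (v : Fin m → X) :
    (φ.rename ρ).Eval E v ↔ φ.Eval E (v ∘ ρ) := by
  induction φ generalizing m with
  | mem | eq => rfl
  | not φ ih => exact not_congr (ih ρ v)
  | and φ ψ ihφ ihψ => exact and_congr (ihφ ρ v) (ihψ ρ v)
  | or φ ψ ihφ ihψ => exact or_congr (ihφ ρ v) (ihψ ρ v)
  | bexMem i φ ih | bexSub i φ ih =>
    refine exists_congr fun x => and_congr_right fun _ => ?_
    rw [ih, snoc_comp_liftRenaming]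
  | ballMem i φ ih | ballSub i φ ih =>
    refine forall_congr' fun x => imp_congr_right fun _ => ?_
    rw [ih, snoc_comp_liftRenaming]
  | ex φ ih => exact exists_congr fun x => by rw [ih, snoc_comp_liftRenaming]
  | all φ ih => exact forall_congr' fun x => by rw [ih, snoc_comp_liftRenaming]

theorem IsDelta0P.rename {n m : ℕ} {φ : SF n} (hφ : φ.IsDelta0P) (ρ : Fin n → Fin m) :
    (φ.rename ρ).IsDelta0P := by
  induction φ generalizing m with
  | mem | eq => trivial
  | not φ ih | bexMem _ φ ih | ballMem _ φ ih | bexSub _ φ ih | ballSub _ φ ih =>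
    exact ih hφ _
  | and φ ψ ihφ ihψ | or φ ψ ihφ ihψ => exact ⟨ihφ hφ.1 ρ, ihψ hφ.2 ρ⟩
  | ex | all => exact hφ.elim

theorem IsDelta0.rename {n m : ℕ} {φ : SF n} (hφ : φ.IsDelta0) (ρ : Fin n → Fin m) :
    (φ.rename ρ).IsDelta0 := by
  induction φ generalizing m with
  | mem | eq => trivial
  | not φ ih | bexMem _ φ ih | ballMem _ φ ih => exact ih hφ _
  | and φ ψ ihφ ihψ | or φ ψ ihφ ihψ => exact ⟨ihφ hφ.1 ρ, ihψ hφ.2 ρ⟩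
  | bexSub | ballSub | ex | all => exact hφ.elim

class Delta0Closed (Γ : ∀ n, SF n → Prop) : Prop where
  mem {n} (i j : Fin n) : Γ n (.mem i j)
  eq {n} (i j : Fin n) : Γ n (.eq i j)
  not {n} {φ : SF n} : Γ n φ → Γ n φ.not
  and {n} {φ ψ : SF n} : Γ n φ → Γ n ψ → Γ n (φ.and ψ)
  bexMem {n} (i : Fin n) {φ : SF (n + 1)} : Γ (n + 1) φ → Γ n (.bexMem i φ)
  rename {n m} {φ : SF n} : Γ n φ → ∀ ρ : Fin n → Fin m, Γ m (φ.rename ρ)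

instance : Delta0Closed Delta0C where
  mem _ _ := trivial
  eq _ _ := trivial
  not h := h
  and h h' := ⟨h, h'⟩
  bexMem _ := id
  rename := IsDelta0.rename

instance : Delta0Closed Delta0PC where
  mem _ _ := trivial
  eq _ _ := trivial
  not h := h
  and h h' := ⟨h, h'⟩
  bexMem _ := id
  rename := IsDelta0P.rename

def Definable (Γ : ∀ n, SF n → Prop) (E : X → X → Prop) {k : ℕ} (P : (Fin k → X) → Prop) :
    Prop :=
  ∃ φ : SF k, Γ k φ ∧ ∀ v, φ.Eval E v ↔ P v

namespace Definable

variable {Γ : ∀ n, SF n → Prop} {k : ℕ} {P Q : (Fin k → X) → Prop}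

theorem of_iff (h : Definable Γ E P) (hPQ : ∀ v, P v ↔ Q v) : Definable Γ E Q :=
  let ⟨φ, hφ, hφP⟩ := h
  ⟨φ, hφ, fun v => (hφP v).trans (hPQ v)⟩

variable [Delta0Closed Γ]

theorem mem (i j : Fin k) : Definable Γ E fun v => E (v i) (v j) :=
  ⟨.mem i j, Delta0Closed.mem i j, fun _ => Iff.rfl⟩

theorem eq (i j : Fin k) : Definable Γ E fun v => v i = v j :=
  ⟨.eq i j, Delta0Closed.eq i j, fun _ => Iff.rfl⟩

theorem not (h : Definable Γ E P) : Definable Γ E fun v => ¬ P v :=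
  let ⟨φ, hφ, hφP⟩ := h
  ⟨φ.not, Delta0Closed.not hφ, fun v => not_congr (hφP v)⟩

theorem and (h : Definable Γ E P) (h' : Definable Γ E Q) : Definable Γ E fun v => P v ∧ Q v :=
  let ⟨φ, hφ, hφP⟩ := h
  let ⟨ψ, hψ, hψQ⟩ := h'
  ⟨φ.and ψ, Delta0Closed.and hφ hψ, fun v => and_congr (hφP v) (hψQ v)⟩

theorem or (h : Definable Γ E P) (h' : Definable Γ E Q) : Definable Γ E fun v => P v ∨ Q v :=
  (h.not.and h'.not).not.of_iff fun _ => by tauto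

theorem imp (h : Definable Γ E P) (h' : Definable Γ E Q) : Definable Γ E fun v => P v → Q v :=
  (h.not.or h').of_iff fun _ => imp_iff_not_or.symm

/-- The body is written with `Fin.init u` and `u (Fin.last k)` rather than with `Fin.snoc`, so
that applying these lemmas to a goal finds `P` by higher-order pattern unification. -/
theorem bexMem (i : Fin k) {P : (Fin k → X) → X → Prop}
    (h : Definable Γ E fun u : Fin (k + 1) → X => P (Fin.init u) (u (Fin.last k))) :
    Definable Γ E fun v => ∃ x, E x (v i) ∧ P v x :=
  let ⟨φ, hφ, hφP⟩ := h
  ⟨.bexMem i φ, Delta0Closed.bexMem i hφ, fun v => by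
    simp only [Eval, hφP, Fin.init_snoc, Fin.snoc_last]⟩

theorem ballMem (i : Fin k) {P : (Fin k → X) → X → Prop}
    (h : Definable Γ E fun u : Fin (k + 1) → X => P (Fin.init u) (u (Fin.last k))) :
    Definable Γ E fun v => ∀ x, E x (v i) → P v x :=
  (bexMem i (P := fun v x => ¬ P v x) h.not).not.of_iff fun _ => by
    simp only [not_exists, not_and, not_not]

theorem comp {m : ℕ} {P : (Fin m → X) → Prop} (h : Definable Γ E P) (ρ : Fin m → Fin k) :
    Definable Γ E fun v => P (v ∘ ρ) :=
  let ⟨φ, hφ, hφP⟩ := h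
  ⟨φ.rename ρ, Delta0Closed.rename hφ ρ, fun v => (eval_rename φ ρ v).trans (hφP _)⟩

theorem isEmpty (i : Fin k) : Definable Γ E fun v => ∀ z, ¬ E z (v i) :=
  (ballMem i (P := fun _ z => z ≠ z) (eq _ _).not).of_iff fun _ => by simp

theorem succOf (x s : Fin k) : Definable Γ E fun v => SuccOf E (v x) (v s) :=
  ((mem x s).and ((ballMem s (.or (.mem _ _) (.eq _ _))).and (ballMem x (.mem _ _)))).of_iff
    fun v => ⟨fun ⟨hxs, hs, hx⟩ z => ⟨hs z, by rintro (hz | rfl); exacts [hx z hz, hxs]⟩,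
      fun h => ⟨(h _).2 (.inr rfl), fun z => (h z).1, fun z hz => (h z).2 (.inl hz)⟩⟩

theorem eval {n : ℕ} {ψ : SF (n + 2)} (hψ : ψ.IsDelta0P) (ρ : Fin n → Fin k) (x y : Fin k) :
    Definable Delta0PC E fun v => ψ.Eval E (Fin.snoc (Fin.snoc (v ∘ ρ) (v x)) (v y)) :=
  (comp (Γ := Delta0PC) (P := ψ.Eval E) ⟨ψ, hψ, fun _ => Iff.rfl⟩
    (Fin.snoc (Fin.snoc ρ x) y)).of_iff fun v => by simp only [Fin.comp_snoc]

end Definable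

end SF

section Schemes

variable {E : X → X → Prop} {Γ : ∀ n, SF n → Prop} {k : ℕ}

theorem SeparationScheme.exists_mem_iff (h : SeparationScheme E Γ)
    {Q : (Fin k → X) → X → Prop}
    (hQ : SF.Definable Γ E fun u : Fin (k + 1) → X => Q (Fin.init u) (u (Fin.last k)))
    (p : Fin k → X) (a : X) : ∃ b, ∀ x, E x b ↔ E x a ∧ Q p x := by
  obtain ⟨φ, hφ, hφQ⟩ := hQ
  obtain ⟨b, hb⟩ := h k φ hφ p a
  exact ⟨b, fun x => by simp only [hb, hφQ, Fin.init_snoc, Fin.snoc_last]⟩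

theorem CollectionScheme.exists_forall_exists_mem (h : CollectionScheme E Γ)
    {Q : (Fin k → X) → X → X → Prop}
    (hQ : SF.Definable Γ E fun u : Fin (k + 2) → X =>
      Q (Fin.init (Fin.init u)) (u (Fin.last k).castSucc) (u (Fin.last (k + 1))))
    (p : Fin k → X) (a : X) (hex : ∀ x, E x a → ∃ y, Q p x y) :
    ∃ c, ∀ x, E x a → ∃ y, E y c ∧ Q p x y := by
  obtain ⟨φ, hφ, hφQ⟩ := hQ
  have hφ' (x y : X) : φ.Eval E (Fin.snoc (Fin.snoc p x) y) ↔ Q p x y := by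
    simp only [hφQ, Fin.init_snoc, Fin.snoc_last, Fin.snoc_castSucc]
  simp only [← hφ'] at hex ⊢
  exact h k φ hφ p a hex

def OmegaFoundation (E : X → X → Prop) (w : X) (C : ∀ n, SF n → Prop) : Prop :=
  ∀ (n : ℕ) (φ : SF (n + 1)), C _ φ → ∀ p : Fin n → X,
    (∃ x, E x w ∧ φ.Eval E (Fin.snoc p x)) →
    ∃ y, E y w ∧ φ.Eval E (Fin.snoc p y) ∧ ∀ x, E x w → φ.Eval E (Fin.snoc p x) → ¬ E x y

variable {w : X}

theorem OmegaFoundation.exists_minimal_forall (h : OmegaFoundation E w Pi1PC)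
    {Q : (Fin k → X) → X → X → Prop}
    (hQ : SF.Definable Delta0PC E fun u : Fin (k + 2) → X =>
      Q (Fin.init (Fin.init u)) (u (Fin.last k).castSucc) (u (Fin.last (k + 1))))
    (p : Fin k → X) (hex : ∃ x, E x w ∧ ∀ y, Q p x y) :
    ∃ x, E x w ∧ (∀ y, Q p x y) ∧ ∀ x', E x' w → (∀ y, Q p x' y) → ¬ E x' x := by
  obtain ⟨φ, hφ, hφQ⟩ := hQ
  have hφ' (x : X) : (SF.all φ).Eval E (Fin.snoc p x) ↔ ∀ y, Q p x y := by
    refine forall_congr' fun y => ?_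
    simp only [hφQ, Fin.init_snoc, Fin.snoc_last, Fin.snoc_castSucc]
  simp only [← hφ'] at hex ⊢
  exact h k _ ⟨φ, hφ, rfl⟩ p hex

theorem OmegaFoundation.exists_minimal (h : OmegaFoundation E w Pi1PC)
    {Q : (Fin k → X) → X → Prop}
    (hQ : SF.Definable Delta0PC E fun u : Fin (k + 1) → X => Q (Fin.init u) (u (Fin.last k)))
    (p : Fin k → X) (hex : ∃ x, E x w ∧ Q p x) :
    ∃ x, E x w ∧ Q p x ∧ ∀ x', E x' w → Q p x' → ¬ E x' x := by
  obtain ⟨x, hxw, hx⟩ := hex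
  obtain ⟨y, hyw, hy, hmin⟩ := h.exists_minimal_forall (Q := fun p x _ => Q p x)
    (hQ.comp Fin.castSucc) p ⟨x, hxw, fun _ => hx⟩
  exact ⟨y, hyw, hy y, fun x' hx'w hx' => hmin x' hx'w fun _ => hx'⟩

end Schemes

section Pairs

variable {E : X → X → Prop}

theorem exists_isPair (hext : ExtensionalityAx E) (hpair : PairAx E) (x y : X) :
    ∃ q, IsPair E q x y := by
  obtain ⟨s, hs⟩ := hpair x x
  obtain ⟨d, hd⟩ := hpair x y
  obtain ⟨q, hq⟩ := hpair s d
  refine ⟨q, fun z => (hq z).trans ⟨?_, ?_⟩⟩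
  · rintro (rfl | rfl)
    exacts [Or.inl fun t => (hs t).trans or_self_iff, Or.inr hd]
  · rintro (hz | hz)
    exacts [Or.inl (hext _ _ fun t => by rw [hz, hs, or_self]),
      Or.inr (hext _ _ fun t => by rw [hz, hd])]

theorem IsPair.eq_and_eq_or_eq (hpair : PairAx E) {q x y x' y' : X} (h : IsPair E q x y)
    (h' : IsPair E q x' y') : x' = x ∧ (y' = x ∨ y' = y) := by
  obtain ⟨s, hs⟩ := hpair x' x'
  obtain ⟨d, hd⟩ := hpair x' y'
  have hx' : x' = x := by
    rcases (h s).1 ((h' s).2 (.inl fun t => (hs t).trans or_self_iff)) with hsx | hsxy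
    · exact (hsx x').1 ((hs x').2 (.inl rfl))
    · exact (((hs x).1 ((hsxy x).2 (.inl rfl))).elim id id).symm
  refine ⟨hx', ?_⟩
  rcases (h d).1 ((h' d).2 (.inr hd)) with hdx | hdxy
  exacts [.inl ((hdx y').1 ((hd y').2 (.inr rfl))), (hdxy y').1 ((hd y').2 (.inr rfl))]

theorem IsPair.inj (hpair : PairAx E) {q x y x' y' : X} (h : IsPair E q x y)
    (h' : IsPair E q x' y') : x = x' ∧ y = y' := by
  obtain ⟨rfl, hy'⟩ := h.eq_and_eq_or_eq hpair h'
  obtain ⟨-, hy⟩ := h'.eq_and_eq_or_eq hpair h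
  refine ⟨rfl, ?_⟩
  rcases hy with rfl | rfl
  · rcases hy' with rfl | rfl <;> rfl
  · rfl

theorem isPair_iff_bounded (hext : ExtensionalityAx E) (hpair : PairAx E) {q x y : X} :
    IsPair E q x y ↔
      (∀ z, E z q → (E x z ∧ ∀ t, E t z → t = x) ∨
        (E x z ∧ E y z ∧ ∀ t, E t z → t = x ∨ t = y)) ∧
      (∃ z, E z q ∧ E x z ∧ ∀ t, E t z → t = x) ∧
      (∃ z, E z q ∧ E x z ∧ E y z ∧ ∀ t, E t z → t = x ∨ t = y) := by
  have single (z : X) : (∀ t, E t z ↔ t = x) ↔ (E x z ∧ ∀ t, E t z → t = x) :=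
    ⟨fun h => ⟨(h x).2 rfl, fun t => (h t).1⟩, fun h t => ⟨h.2 t, by rintro rfl; exact h.1⟩⟩
  have double (z : X) : (∀ t, E t z ↔ t = x ∨ t = y) ↔
      (E x z ∧ E y z ∧ ∀ t, E t z → t = x ∨ t = y) :=
    ⟨fun h => ⟨(h x).2 (.inl rfl), (h y).2 (.inr rfl), fun t => (h t).1⟩,
      fun h t => ⟨h.2.2 t, by rintro (rfl | rfl); exacts [h.1, h.2.1]⟩⟩
  simp only [IsPair, ← single, ← double]
  obtain ⟨s, hs⟩ := hpair x x
  obtain ⟨d, hd⟩ := hpair x y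
  refine ⟨fun h => ⟨fun z => (h z).1, ⟨s, (h s).2 (.inl fun t => (hs t).trans or_self_iff),
    fun t => (hs t).trans or_self_iff⟩, ⟨d, (h d).2 (.inr hd), hd⟩⟩, ?_⟩
  rintro ⟨hq, ⟨s', hs'q, hs'⟩, ⟨d', hd'q, hd'⟩⟩ z
  refine ⟨hq z, ?_⟩
  rintro (hz | hz)
  · rwa [hext z s' fun t => by rw [hz, hs']]
  · rwa [hext z d' fun t => by rw [hz, hd']]

namespace SF.Definable

variable {Γ : ∀ n, SF n → Prop} [Delta0Closed Γ] {k : ℕ}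

theorem isPair (hext : ExtensionalityAx E) (hpair : PairAx E) (q x y : Fin k) :
    Definable Γ E fun v => IsPair E (v q) (v x) (v y) := by
  simp only [isPair_iff_bounded hext hpair]
  exact .and (.ballMem q (.or (.and (.mem _ _) (.ballMem _ (.eq _ _)))
      (.and (.mem _ _) (.and (.mem _ _) (.ballMem _ (.or (.eq _ _) (.eq _ _)))))))
    (.and (.bexMem q (.and (.mem _ _) (.ballMem _ (.eq _ _))))
      (.bexMem q (.and (.mem _ _) (.and (.mem _ _) (.ballMem _ (.or (.eq _ _) (.eq _ _)))))))

end SF.Definable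

end Pairs

theorem SuccOf.mem_self {E : X → X → Prop} {x s : X} (h : SuccOf E x s) : E x s :=
  (h x).2 (.inr rfl)

namespace ModelMminus

variable {E : X → X → Prop} (hM : ModelMminus E)
include hM

theorem ext : ExtensionalityAx E := hM.1
theorem pair : PairAx E := hM.2.2.1
theorem union : UnionAx E := hM.2.2.2.1
theorem separation : SeparationScheme E Delta0C := hM.2.2.2.2.2.2.2.1
theorem foundation : SetFoundationAx E := hM.2.2.2.2.2.2.2.2

theorem mem_asymm {x y : X} (hxy : E x y) : ¬ E y x := fun hyx => by
  obtain ⟨d, hd⟩ := hM.pair x y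
  obtain ⟨z, hzd, hz⟩ := hM.foundation d ⟨x, (hd x).2 (.inl rfl)⟩
  rcases (hd z).1 hzd with rfl | rfl
  exacts [hz y hyx ((hd y).2 (.inr rfl)), hz x hxy ((hd x).2 (.inl rfl))]

theorem mem_irrefl (x : X) : ¬ E x x := fun hx => hM.mem_asymm hx hx

theorem exists_insert (f x : X) : ∃ f', ∀ z, E z f' ↔ E z f ∨ z = x := by
  obtain ⟨s, hs⟩ := hM.pair x x
  obtain ⟨d, hd⟩ := hM.pair f s
  obtain ⟨f', hf'⟩ := hM.union d
  refine ⟨f', fun z => (hf' z).trans ⟨?_, ?_⟩⟩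
  · rintro ⟨t, htd, hzt⟩
    rcases (hd t).1 htd with rfl | rfl
    exacts [.inl hzt, .inr (((hs z).1 hzt).elim id id)]
  · rintro (hz | rfl)
    exacts [⟨f, (hd f).2 (.inl rfl), hz⟩, ⟨s, (hd s).2 (.inr rfl), (hs z).2 (.inl rfl)⟩]

theorem eq_of_succOf {x x' s : X} (h : SuccOf E x s) (h' : SuccOf E x' s) : x = x' := by
  rcases (h' x).1 h.mem_self with hxx' | rfl
  · rcases (h x').1 h'.mem_self with hx'x | rfl
    exacts [(hM.mem_asymm hxx' hx'x).elim, rfl]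
  · rfl

end ModelMminus

namespace IsOmega

variable {E : X → X → Prop} {w : X} (hM : ModelMminus E) (hw : IsOmega E w)
include hM hw

theorem induction {k : ℕ} {Q : (Fin k → X) → X → Prop}
    (hQ : SF.Definable Delta0C E fun u : Fin (k + 1) → X => Q (Fin.init u) (u (Fin.last k)))
    (p : Fin k → X) (zero : ∀ e, E e w → (∀ z, ¬ E z e) → Q p e)
    (succ : ∀ x s, E x w → E s w → SuccOf E x s → Q p x → Q p s) : ∀ x, E x w → Q p x := by
  obtain ⟨b, hb⟩ := hM.separation.exists_mem_iff hQ p w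
  have hind : InductiveSet E b := by
    obtain ⟨e, hew, he⟩ := hw.1.1
    refine ⟨⟨e, (hb e).2 ⟨hew, zero e hew he⟩, he⟩, fun x hx => ?_⟩
    obtain ⟨hxw, hQx⟩ := (hb x).1 hx
    obtain ⟨s, hsw, hs⟩ := hw.1.2 x hxw
    exact ⟨s, (hb s).2 ⟨hsw, succ x s hxw hsw hs hQx⟩, hs⟩
  exact fun x hx => ((hb x).1 (hw.2 b hind x hx)).2

theorem mem_of_mem {x y : X} : E x w → E y x → E y w := by
  refine fun hx => induction hM hw (k := 1) (Q := fun p x => ∀ y, E y x → E y (p 0))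
    (.ballMem _ (.mem _ _)) (fun _ => w) (fun e _ he y hy => (he y hy).elim) ?_ x hx y
  intro x s hxw _ hs ih y hy
  rcases (hs y).1 hy with hyx | rfl
  exacts [ih y hyx, hxw]

theorem transSet_of_mem {x : X} : E x w → TransSet E x := by
  refine induction hM hw (k := 0) (Q := fun _ x => TransSet E x)
    (.ballMem _ (.ballMem _ (.mem _ _))) Fin.elim0 (fun e _ he y hy => (he y hy).elim) ?_ x
  intro x s _ _ hs ih y hy z hz
  rcases (hs y).1 hy with hyx | rfl
  exacts [(hs z).2 (.inl (ih y hyx z hz)), (hs z).2 (.inl hz)]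

theorem exists_pred {x : X} (hx : E x w) (hne : ∃ z, E z x) : ∃ y, E y w ∧ SuccOf E y x := by
  obtain ⟨z, hz⟩ := hne
  have := induction hM hw (k := 1) (Q := fun p x => (∀ z, ¬ E z x) ∨ ∃ y, E y (p 0) ∧ SuccOf E y x)
    (.or (.isEmpty _) (.bexMem _ (.succOf _ _))) (fun _ => w) (fun e _ he => .inl he)
    (fun x s hxw _ hs _ => .inr ⟨x, hxw, hs⟩) x hx
  exact this.resolve_left fun he => he z hz

end IsOmega

section Countdown

variable {E : X → X → Prop}

def PairMem (E : X → X → Prop) (x y f : X) : Prop := ∃ q, E q f ∧ IsPair E q x y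

/-- In `ω = w`, the countdown `a, a - 1, a - 2, …` of length `m`, as a relation `f ⊆ m × ω`;
that it is a function is `IsCountdown.eq_of_pairMem`. -/
structure IsCountdown (E : X → X → Prop) (w a m f : X) : Prop where
  subset : ∀ q, E q f → ∃ i, E i m ∧ ∃ y, E y w ∧ IsPair E q i y
  total : ∀ i, E i m → ∃ y, E y w ∧ PairMem E i y f
  zero : ∀ i, E i m → ∀ y, E y w → PairMem E i y f → (∀ z, ¬ E z i) → y = a
  succ : ∀ i, E i m → ∀ y, E y w → PairMem E i y f → ∀ i', E i' m → SuccOf E i i' →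
    ∀ y', E y' w → PairMem E i' y' f → SuccOf E y' y

namespace SF.Definable

variable {Γ : ∀ n, SF n → Prop} [Delta0Closed Γ] {k : ℕ}

theorem pairMem (hext : ExtensionalityAx E) (hpair : PairAx E) (x y f : Fin k) :
    Definable Γ E fun v => PairMem E (v x) (v y) (v f) :=
  .bexMem f (.isPair hext hpair _ _ _)

theorem isCountdown (hext : ExtensionalityAx E) (hpair : PairAx E) (w a m f : Fin k) :
    Definable Γ E fun v => IsCountdown E (v w) (v a) (v m) (v f) := by
  refine Definable.of_iff (P := fun v => _ ∧ _ ∧ _ ∧ _) ?_ fun v =>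
    ⟨fun h => ⟨h.1, h.2.1, h.2.2.1, h.2.2.2⟩, fun h => ⟨h.subset, h.total, h.zero, h.succ⟩⟩
  exact .and (.ballMem f (.bexMem _ (.bexMem _ (.isPair hext hpair _ _ _))))
    (.and (.ballMem m (.bexMem _ (.pairMem hext hpair _ _ _)))
      (.and (.ballMem m (.ballMem _ (.imp (.pairMem hext hpair _ _ _)
        (.imp (.isEmpty _) (.eq _ _)))))
      (.ballMem m (.ballMem _ (.imp (.pairMem hext hpair _ _ _) (.ballMem _ (.imp (.succOf _ _)
        (.ballMem _ (.imp (.pairMem hext hpair _ _ _) (.succOf _ _))))))))))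

end SF.Definable

end Countdown

namespace IsCountdown

variable {E : X → X → Prop} {w a m f : X}

theorem mem_of_pairMem (hpair : PairAx E) (h : IsCountdown E w a m f) {i y : X}
    (hiy : PairMem E i y f) : E i m ∧ E y w := by
  obtain ⟨q, hqf, hq⟩ := hiy
  obtain ⟨i', hi'm, y', hy'w, hq'⟩ := h.subset q hqf
  obtain ⟨rfl, rfl⟩ := hq.inj hpair hq'
  exact ⟨hi'm, hy'w⟩

theorem of_forall_not_mem (hm : ∀ z, ¬ E z m) (hf : ∀ z, ¬ E z f) : IsCountdown E w a m f where
  subset q hq := (hf q hq).elim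
  total i hi := (hm i hi).elim
  zero i hi := (hm i hi).elim
  succ i hi := (hm i hi).elim

variable (hM : ModelMminus E) (hw : IsOmega E w)
include hM hw

theorem eq_of_pairMem (hF : OmegaFoundation E w Pi1PC) {m' f' : X} (hm : E m w)
    (hm' : E m' w) (h : IsCountdown E w a m f) (h' : IsCountdown E w a m' f') {i y y' : X}
    (hy : PairMem E i y f) (hy' : PairMem E i y' f') : y = y' := by
  by_contra hne
  have hpair := hM.pair
  obtain ⟨i₀, hi₀w, ⟨y₀, hy₀w, y₀', hy₀'w, hy₀, hy₀', hne₀⟩, hmin⟩ := hF.exists_minimal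
    (k := 3) (Q := fun p i => ∃ y, E y (p 0) ∧ ∃ y', E y' (p 0) ∧
      PairMem E i y (p 1) ∧ PairMem E i y' (p 2) ∧ y ≠ y')
    (.bexMem _ (.bexMem _ (.and (.pairMem hM.ext hpair _ _ _)
      (.and (.pairMem hM.ext hpair _ _ _) (.not (.eq _ _)))))) ![w, f, f']
    ⟨i, hw.mem_of_mem hM hm (h.mem_of_pairMem hpair hy).1, y,
      (h.mem_of_pairMem hpair hy).2, y', (h'.mem_of_pairMem hpair hy').2, hy, hy', hne⟩
  have hi₀m := (h.mem_of_pairMem hpair hy₀).1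
  have hi₀m' := (h'.mem_of_pairMem hpair hy₀').1
  by_cases hi₀ : ∀ z, ¬ E z i₀
  · exact hne₀ ((h.zero i₀ hi₀m y₀ hy₀w hy₀ hi₀).trans (h'.zero i₀ hi₀m' y₀' hy₀'w hy₀' hi₀).symm)
  push Not at hi₀
  obtain ⟨j, hjw, hj⟩ := hw.exists_pred hM hi₀w hi₀
  have hjm := hw.transSet_of_mem hM hm i₀ hi₀m j hj.mem_self
  have hjm' := hw.transSet_of_mem hM hm' i₀ hi₀m' j hj.mem_self
  obtain ⟨yⱼ, hyⱼw, hyⱼ⟩ := h.total j hjm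
  obtain ⟨yⱼ', hyⱼ'w, hyⱼ'⟩ := h'.total j hjm'
  have hyⱼeq : yⱼ = yⱼ' := by
    by_contra hne'
    exact hmin j hjw ⟨yⱼ, hyⱼw, yⱼ', hyⱼ'w, hyⱼ, hyⱼ', hne'⟩ hj.mem_self
  subst hyⱼeq
  exact hne₀ (hM.eq_of_succOf (h.succ j hjm yⱼ hyⱼw hyⱼ i₀ hi₀m hj y₀ hy₀w hy₀)
    (h'.succ j hjm' yⱼ hyⱼ'w hyⱼ' i₀ hi₀m' hj y₀' hy₀'w hy₀'))

theorem insert {k k' y' q f' : X} (hk : E k w) (h : IsCountdown E w a k f)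
    (hk' : SuccOf E k k') (hy'w : E y' w) (hzero : (∀ z, ¬ E z k) → y' = a)
    (hsucc : ∀ j y, SuccOf E j k → PairMem E j y f → SuccOf E y' y) (hq : IsPair E q k y')
    (hf' : ∀ z, E z f' ↔ E z f ∨ z = q) : IsCountdown E w a k' f' := by
  have hpairMem (i y : X) : PairMem E i y f' ↔ PairMem E i y f ∨ (i = k ∧ y = y') := by
    constructor
    · rintro ⟨q', hq'f', hq'⟩
      rcases (hf' q').1 hq'f' with hq'f | rfl
      exacts [.inl ⟨q', hq'f, hq'⟩, .inr (hq'.inj hM.pair hq)]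
    · rintro (⟨q', hq'f, hq'⟩ | ⟨rfl, rfl⟩)
      exacts [⟨q', (hf' q').2 (.inl hq'f), hq'⟩, ⟨q, (hf' q).2 (.inr rfl), hq⟩]
  have hmem {i y : X} (hiy : PairMem E i y f) := (h.mem_of_pairMem hM.pair hiy).1
  refine ⟨fun q' hq' => ?_, fun i hi => ?_, fun i _ y _ hiy he => ?_,
    fun i _ y hyw hiy i' hi' hii' y'' hy''w hi'y'' => ?_⟩
  · rcases (hf' q').1 hq' with hq'f | rfl
    · obtain ⟨i, hik, y, hyw, hq'⟩ := h.subset q' hq'f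
      exact ⟨i, (hk' i).2 (.inl hik), y, hyw, hq'⟩
    · exact ⟨k, hk'.mem_self, y', hy'w, hq⟩
  · rcases (hk' i).1 hi with hik | rfl
    · obtain ⟨y, hyw, hiy⟩ := h.total i hik
      exact ⟨y, hyw, (hpairMem i y).2 (.inl hiy)⟩
    · exact ⟨y', hy'w, (hpairMem _ _).2 (.inr ⟨rfl, rfl⟩)⟩
  · rcases (hpairMem i y).1 hiy with hiy | ⟨rfl, rfl⟩
    exacts [h.zero i (hmem hiy) y ‹_› hiy he, hzero he]
  · rcases (hpairMem i y).1 hiy with hiy | ⟨rfl, rfl⟩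
    · rcases (hpairMem i' y'').1 hi'y'' with hi'y'' | ⟨rfl, rfl⟩
      exacts [h.succ i (hmem hiy) y hyw hiy i' (hmem hi'y'') hii' y'' hy''w hi'y'',
        hsucc i y hii' hiy]
    · exfalso
      rcases (hk' i').1 hi' with hi'k | rfl
      exacts [hM.mem_irrefl _ (hw.transSet_of_mem hM hk i' hi'k _ hii'.mem_self),
        hM.mem_irrefl _ hii'.mem_self]

end IsCountdown

namespace IsOmega

variable {E : X → X → Prop} {w : X} (hM : ModelMminus E) (hw : IsOmega E w)
include hM hw

theorem not_forall_exists_isCountdown_mem (hF : OmegaFoundation E w Pi1PC) {a c : X}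
    (ha : E a w) :
    ¬ ∀ m, E m w → ∃ f, E f c ∧ IsCountdown E w a m f := by
  intro hc
  have hpair := hM.pair
  obtain ⟨L, hL⟩ := hM.separation.exists_mem_iff (k := 3)
    (Q := fun p y => ∃ f, E f (p 0) ∧ ∃ m, E m (p 1) ∧ IsCountdown E (p 1) (p 2) m f ∧
      ∃ i, E i m ∧ SuccOf E i m ∧ PairMem E i y f)
    (.bexMem _ (.bexMem _ (.and (.isCountdown hM.ext hpair _ _ _ _)
      (.bexMem _ (.and (.succOf _ _) (.pairMem hM.ext hpair _ _ _)))))) ![c, w, a] w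
  have haL : E a L := by
    obtain ⟨e, hew, he⟩ := hw.1.1
    obtain ⟨s, hsw, hs⟩ := hw.1.2 e hew
    obtain ⟨f, hfc, hf⟩ := hc s hsw
    obtain ⟨y, hyw, hy⟩ := hf.total e hs.mem_self
    obtain rfl := hf.zero e hs.mem_self y hyw hy he
    exact (hL y).2 ⟨hyw, f, hfc, s, hsw, hf, e, hs.mem_self, hs, hy⟩
  obtain ⟨b, hbL, hbmin⟩ := hM.foundation L ⟨a, haL⟩
  obtain ⟨hbw, f, hfc, m, hmw, hf, i, him, hi, hib⟩ := (hL b).1 hbL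
  obtain ⟨s, hsw, hs⟩ := hw.1.2 m hmw
  obtain ⟨f', hf'c, hf'⟩ := hc s hsw
  have his : E i s := (hs i).2 (.inl him)
  obtain ⟨y₁, hy₁w, hy₁⟩ := hf'.total i his
  obtain rfl := hf.eq_of_pairMem hM hw hF hmw hsw hf' hib hy₁
  obtain ⟨y₂, hy₂w, hy₂⟩ := hf'.total m hs.mem_self
  have hy₂b : SuccOf E y₂ b := hf'.succ i his b hbw hy₁ m hs.mem_self hi y₂ hy₂w hy₂
  exact hbmin y₂ hy₂b.mem_self ((hL y₂).2 ⟨hy₂w, f', hf'c, s, hsw, hf', m, hs.mem_self, hs, hy₂⟩)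

end IsOmega

section WitnessedCountdown

variable {E : X → X → Prop} {n : ℕ}

def BoundedWitness (E : X → X → Prop) (ψ : SF (n + 2)) (p : Fin n → X) (y z : X) : Prop :=
  ψ.Eval E (Fin.snoc (Fin.snoc p y) z) ∨ ∃ x, E x y ∧ ψ.Eval E (Fin.snoc (Fin.snoc p x) z)

/-- The countdown `f` and the set `W` of witnesses for its values are packed into one set `g`,
so that "there is no witnessed countdown of length `m`" is `Π₁^𝒫`. -/
def HasWitnessedCountdown (E : X → X → Prop) (ψ : SF (n + 2)) (p : Fin n → X) (w a m g : X) :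
    Prop :=
  ∃ f, E f g ∧ IsCountdown E w a m f ∧ ∃ W, E W g ∧
    ∀ i, E i m → ∀ y, E y w → PairMem E i y f → ∃ z, E z W ∧ BoundedWitness E ψ p y z

theorem SF.Definable.hasWitnessedCountdown (hext : ExtensionalityAx E) (hpair : PairAx E)
    {ψ : SF (n + 2)} (hψ : ψ.IsDelta0P) {k : ℕ} (ρ : Fin n → Fin k) (w a m g : Fin k) :
    Definable Delta0PC E fun v => HasWitnessedCountdown E ψ (v ∘ ρ) (v w) (v a) (v m) (v g) :=
  .bexMem g (.and (.isCountdown hext hpair _ _ _ _) (.bexMem _ (.ballMem _ (.ballMem _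
    (.imp (.pairMem hext hpair _ _ _) (.bexMem _ (.or (.eval hψ _ _ _)
      (.bexMem _ (.eval hψ _ _ _)))))))))

end WitnessedCountdown

section Descent

variable {E : X → X → Prop} {n : ℕ} {ψ : SF (n + 2)} {p : Fin n → X} {w a : X}
  (hM : ModelMminus E) (hw : IsOmega E w)
  (hdesc : ∀ y, E y w → (∃ z, ψ.Eval E (Fin.snoc (Fin.snoc p y) z)) →
    ∃ x, E x w ∧ E x y ∧ ∃ z, ψ.Eval E (Fin.snoc (Fin.snoc p x) z))
include hM hw hdesc

theorem exists_succOf_boundedWitness {y z : X} (hyw : E y w) (hz : BoundedWitness E ψ p y z) :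
    ∃ y', E y' w ∧ SuccOf E y' y ∧ ∃ z', BoundedWitness E ψ p y' z' := by
  obtain ⟨x, hxy, hx⟩ : ∃ x, (x = y ∨ E x y) ∧ ∃ z, ψ.Eval E (Fin.snoc (Fin.snoc p x) z) := by
    rcases hz with hz | ⟨x, hxy, hz⟩
    exacts [⟨y, .inl rfl, z, hz⟩, ⟨x, .inr hxy, z, hz⟩]
  have hxw : E x w := hxy.elim (· ▸ hyw) (hw.mem_of_mem hM hyw)
  obtain ⟨x', -, hx'x, z', hz'⟩ := hdesc x hxw hx
  have hx'y : E x' y := hxy.elim (· ▸ hx'x) fun hxy => hw.transSet_of_mem hM hyw x hxy x' hx'x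
  obtain ⟨y', hy'w, hy'⟩ := hw.exists_pred hM hyw ⟨x', hx'y⟩
  refine ⟨y', hy'w, hy', z', ?_⟩
  rcases (hy' x').1 hx'y with hx'y' | rfl
  exacts [.inr ⟨x', hx'y', hz'⟩, .inl hz']

variable (hF : OmegaFoundation E w Pi1PC) {z₀ : X} (ha : E a w)
  (hz₀ : ψ.Eval E (Fin.snoc (Fin.snoc p a) z₀))
include hF ha hz₀

theorem IsCountdown.exists_next_boundedWitness {k f W : X} (hk : E k w)
    (hf : IsCountdown E w a k f)
    (hW : ∀ i, E i k → ∀ y, E y w → PairMem E i y f → ∃ z, E z W ∧ BoundedWitness E ψ p y z) :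
    ∃ y', E y' w ∧ ((∀ t, ¬ E t k) → y' = a) ∧
      (∀ j y, SuccOf E j k → PairMem E j y f → SuccOf E y' y) ∧
      ∃ z', BoundedWitness E ψ p y' z' := by
  by_cases hk₀ : ∀ t, ¬ E t k
  · exact ⟨a, ha, fun _ => rfl, fun j _ hj _ => (hk₀ j hj.mem_self).elim, z₀, .inl hz₀⟩
  push Not at hk₀
  obtain ⟨j, -, hj⟩ := hw.exists_pred hM hk hk₀
  obtain ⟨y, hyw, hjy⟩ := hf.total j hj.mem_self
  obtain ⟨z, -, hz⟩ := hW j hj.mem_self y hyw hjy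
  obtain ⟨y', hy'w, hy', hz'⟩ := exists_succOf_boundedWitness hM hw hdesc hyw hz
  refine ⟨y', hy'w, fun h => (h j hj.mem_self).elim, fun j' y'' hj' hj'y'' => ?_, hz'⟩
  obtain rfl := hM.eq_of_succOf hj' hj
  obtain rfl := hf.eq_of_pairMem hM hw hF hk hk hf hj'y'' hjy
  exact hy'

theorem HasWitnessedCountdown.exists_succOf {k k' g : X} (hk : E k w) (hk' : SuccOf E k k')
    (hg : HasWitnessedCountdown E ψ p w a k g) : ∃ g', HasWitnessedCountdown E ψ p w a k' g' := by
  obtain ⟨f, -, hf, W, -, hW⟩ := hg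
  obtain ⟨y', hy'w, hzero, hsucc, z', hz'⟩ :=
    hf.exists_next_boundedWitness hM hw hdesc hF ha hz₀ hk hW
  obtain ⟨q, hq⟩ := exists_isPair hM.ext hM.pair k y'
  obtain ⟨f', hf'⟩ := hM.exists_insert f q
  obtain ⟨W', hW'⟩ := hM.exists_insert W z'
  obtain ⟨g', hg'⟩ := hM.pair f' W'
  refine ⟨g', f', (hg' f').2 (.inl rfl), hf.insert hM hw hk hk' hy'w hzero hsucc hq hf', W',
    (hg' W').2 (.inr rfl), fun i _ y hyw ⟨q', hq'f', hq'⟩ => ?_⟩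
  rcases (hf' q').1 hq'f' with hq'f | rfl
  · obtain ⟨z, hzW, hz⟩ :=
      hW i (hf.mem_of_pairMem hM.pair ⟨q', hq'f, hq'⟩).1 y hyw ⟨q', hq'f, hq'⟩
    exact ⟨z, (hW' z).2 (.inl hzW), hz⟩
  · obtain ⟨rfl, rfl⟩ := hq'.inj hM.pair hq
    exact ⟨z', (hW' z').2 (.inr rfl), hz'⟩

theorem exists_hasWitnessedCountdown (hψ : ψ.IsDelta0P) {m : X} (hm : E m w) :
    ∃ g, HasWitnessedCountdown E ψ p w a m g := by
  by_contra hm'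
  push Not at hm'
  obtain ⟨l, hlw, hl, hlmin⟩ := hF.exists_minimal_forall (k := n + 2)
    (Q := fun p' m g => ¬ HasWitnessedCountdown E ψ (Fin.init (Fin.init p'))
      (p' (Fin.last n).castSucc) (p' (Fin.last (n + 1))) m g)
    (.not (.hasWitnessedCountdown hM.ext hM.pair hψ _ _ _ _ _)) (Fin.snoc (Fin.snoc p w) a)
    ⟨m, hm, by simpa only [Fin.init_snoc, Fin.snoc_castSucc, Fin.snoc_last] using hm'⟩
  simp only [Fin.init_snoc, Fin.snoc_castSucc, Fin.snoc_last] at hl hlmin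
  by_cases hl₀ : ∀ z, ¬ E z l
  · obtain ⟨g, hg⟩ := hM.pair l l
    exact hl g ⟨l, (hg l).2 (.inl rfl), .of_forall_not_mem hl₀ hl₀, l, (hg l).2 (.inl rfl),
      fun i hi => (hl₀ i hi).elim⟩
  push Not at hl₀
  obtain ⟨k, hkw, hk⟩ := hw.exists_pred hM hlw hl₀
  obtain ⟨g, hg⟩ : ∃ g, HasWitnessedCountdown E ψ p w a k g := by
    by_contra hk'
    push Not at hk'
    exact hlmin k hkw hk' hk.mem_self
  obtain ⟨g', hg'⟩ := hg.exists_succOf hM hw hdesc hF ha hz₀ hkw hk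
  exact hl g' hg'

end Descent

/-- over `M⁻ + Δ₀^𝒫-Collection`, `Π₁^𝒫`-Foundation on `ω` implies
`Σ₁^𝒫`-Foundation on `ω`. -/
theorem sigma1P_foundation_omega_of_pi1P (X : Type u) (E : X → X → Prop)
    (hM : ModelMminus E) (hColl : CollectionScheme E Delta0PC)
    (w : X) (hw : IsOmega E w)
    (hPi : ∀ (n : ℕ) (φ : SF (n + 1)), Pi1PC _ φ → ∀ p : Fin n → X,
      (∃ x, E x w ∧ φ.Eval E (Fin.snoc p x)) →
      ∃ y, E y w ∧ φ.Eval E (Fin.snoc p y) ∧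
        ∀ x, E x w → φ.Eval E (Fin.snoc p x) → ¬ E x y) :
    ∀ (n : ℕ) (φ : SF (n + 1)), Sigma1PC _ φ → ∀ p : Fin n → X,
      (∃ x, E x w ∧ φ.Eval E (Fin.snoc p x)) →
      ∃ y, E y w ∧ φ.Eval E (Fin.snoc p y) ∧
        ∀ x, E x w → φ.Eval E (Fin.snoc p x) → ¬ E x y := by
  rintro n _ ⟨ψ, hψ, rfl⟩ p ⟨a, ha, z₀, hz₀⟩
  by_contra hleast
  have hdesc : ∀ y, E y w → (∃ z, ψ.Eval E (Fin.snoc (Fin.snoc p y) z)) →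
      ∃ x, E x w ∧ E x y ∧ ∃ z, ψ.Eval E (Fin.snoc (Fin.snoc p x) z) := fun y hyw hy => by
    by_contra hy'
    exact hleast ⟨y, hyw, hy, fun x hxw hx hxy => hy' ⟨x, hxw, hxy, hx⟩⟩
  obtain ⟨c, hc⟩ := hColl.exists_forall_exists_mem (k := n + 2)
    (Q := fun p' m g => HasWitnessedCountdown E ψ (Fin.init (Fin.init p'))
      (p' (Fin.last n).castSucc) (p' (Fin.last (n + 1))) m g)
    (.hasWitnessedCountdown hM.ext hM.pair hψ _ _ _ _ _) (Fin.snoc (Fin.snoc p w) a) w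
    fun m hm => by
      simpa only [Fin.init_snoc, Fin.snoc_castSucc, Fin.snoc_last] using
        exists_hasWitnessedCountdown hM hw hdesc hPi ha hz₀ hψ hm
  simp only [Fin.init_snoc, Fin.snoc_castSucc, Fin.snoc_last] at hc
  obtain ⟨u, hu⟩ := hM.union c
  refine hw.not_forall_exists_isCountdown_mem hM hPi (c := u) ha fun m hm => ?_
  obtain ⟨g, hgc, f, hfg, hf, -⟩ := hc m hm
  exact ⟨f, (hu f).2 ⟨g, hgc, hfg⟩, hf⟩
end

section
/- If M is a model of M⁻ in which every nonempty Σ1^P-definable (with parameters) subclass of ω^M has an E-least element, then every nonempty Π1^P-definable (with parameters) subclass of ω^M has an E-least element. (Σ1^P-Foundation on ω implies Π1^P-Foundation on ω over M⁻.) -/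
universe u

variable {X : Type u}

/-!
Suppose the `Π₁^𝒫` class `S = {y ∈ ω : ∀ v, ψ(y, v)}` contains `P` but has no least element, so
in particular `0 ∉ S`. Let `C` be the class of `x ∈ ω` such that some `d ≥ P - x` has all of
`{0, …, d}` outside `S`. The difference `P - x` is bounded by an `∈`-reversing map from
`P ∖ x` into `d`, and `{0, …, d} ∩ S = ∅` is certified by a set of refuting witnesses `v` with
`¬ψ`, so `C` is `Σ₁^𝒫`. Now `P ∈ C`, and `C` has no least element: given `x ∈ C` with `P ∉ x`
(otherwise `P` is smaller), we have `d < P` since `P ∈ S`, so `x ≠ 0` because `P` cannot be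
`∈`-reversed into its member `d`; and for `x = x' + 1`, the number `d + 1` is again outside `S`
(otherwise `S` would have an element `≤ d`), so extending the map by `x' ↦ d` shows `x' ∈ C`.
This contradicts `Σ₁^𝒫`-foundation.
-/

section Formulas

lemma Fin.snoc_mk_of_lt {m j : ℕ} (v : Fin m → X) (t : X) (h' : j < m + 1) (h : j < m) :
    (Fin.snoc v t : Fin (m + 1) → X) ⟨j, h'⟩ = v ⟨j, h⟩ :=
  Fin.snoc_castSucc (α := fun _ => X) t v ⟨j, h⟩

lemma Fin.snoc_mk_of_eq {m j : ℕ} (v : Fin m → X) (t : X) (h' : j < m + 1) (h : j = m) :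
    (Fin.snoc v t : Fin (m + 1) → X) ⟨j, h'⟩ = t := by
  subst h
  exact Fin.snoc_last (α := fun _ => X) t v

def liftRen {a b : ℕ} (ρ : Fin a → Fin b) : Fin (a + 1) → Fin (b + 1) :=
  Fin.snoc (fun i => (ρ i).castSucc) (Fin.last b)

def SF.rename_s5 : {a b : ℕ} → (Fin a → Fin b) → SF a → SF b
  | _, _, ρ, .mem i j => .mem (ρ i) (ρ j)
  | _, _, ρ, .eq i j => .eq (ρ i) (ρ j)
  | _, _, ρ, .not φ => .not (φ.rename_s5 ρ)
  | _, _, ρ, .and φ ψ => .and (φ.rename_s5 ρ) (ψ.rename_s5 ρ)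
  | _, _, ρ, .or φ ψ => .or (φ.rename_s5 ρ) (ψ.rename_s5 ρ)
  | _, _, ρ, .bexMem i φ => .bexMem (ρ i) (φ.rename_s5 (liftRen ρ))
  | _, _, ρ, .ballMem i φ => .ballMem (ρ i) (φ.rename_s5 (liftRen ρ))
  | _, _, ρ, .bexSub i φ => .bexSub (ρ i) (φ.rename_s5 (liftRen ρ))
  | _, _, ρ, .ballSub i φ => .ballSub (ρ i) (φ.rename_s5 (liftRen ρ))
  | _, _, ρ, .ex φ => .ex (φ.rename_s5 (liftRen ρ))
  | _, _, ρ, .all φ => .all (φ.rename_s5 (liftRen ρ))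

lemma Fin.snoc_comp_liftRen {a b : ℕ} (ρ : Fin a → Fin b) (v : Fin b → X) (x : X) :
    (Fin.snoc v x : Fin (b + 1) → X) ∘ liftRen ρ = Fin.snoc (v ∘ ρ) x := by
  funext i
  refine Fin.lastCases ?_ (fun i => ?_) i <;> simp [liftRen]

lemma SF.eval_rename_s5 (E : X → X → Prop) {a b : ℕ} (φ : SF a) (ρ : Fin a → Fin b)
    (v : Fin b → X) : (φ.rename_s5 ρ).Eval E v ↔ φ.Eval E (v ∘ ρ) := by
  induction φ generalizing b with
  | mem | eq => rfl
  | _ => simp only [SF.rename_s5, SF.Eval, Fin.snoc_comp_liftRen, Function.comp_apply, *]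

lemma SF.IsDelta0P.rename_s5 {a b : ℕ} {φ : SF a} (hφ : φ.IsDelta0P) (ρ : Fin a → Fin b) :
    (φ.rename_s5 ρ).IsDelta0P := by
  induction φ generalizing b <;> simp_all [SF.rename_s5, SF.IsDelta0P]

lemma Fin.snoc_comp_castLE {m n : ℕ} (v : Fin m → X) (t : X) (h : n ≤ m + 1) (h' : n ≤ m) :
    (Fin.snoc v t : Fin (m + 1) → X) ∘ Fin.castLE h = v ∘ Fin.castLE h' :=
  funext fun i => Fin.snoc_mk_of_lt v t _ (by omega)

def pinRen {m n : ℕ} (h : n ≤ m) (a b : Fin m) : Fin (n + 2) → Fin m :=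
  Fin.snoc (Fin.snoc (Fin.castLE h) a) b

lemma comp_pinRen {m n : ℕ} (h : n ≤ m) (a b : Fin m) (v : Fin m → X) :
    v ∘ pinRen h a b = Fin.snoc (Fin.snoc (v ∘ Fin.castLE h) (v a)) (v b) := by
  simp only [pinRen, Fin.comp_snoc]

abbrev idx {m : ℕ} (j : ℕ) (h : j < m := by omega) : Fin m := ⟨j, h⟩

def iffF {m : ℕ} (φ χ : SF m) : SF m := .or (.and φ χ) (.and (.not φ) (.not χ))

lemma iffF_eval (E : X → X → Prop) {m : ℕ} (φ χ : SF m) (v : Fin m → X) :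
    (iffF φ χ).Eval E v ↔ (φ.Eval E v ↔ χ.Eval E v) := by
  simp only [iffF, SF.Eval]
  tauto

end Formulas

section SetBasics

variable {E : X → X → Prop}

lemma exists_singleton (hPair : PairAx E) (a : X) : ∃ s, ∀ t, E t s ↔ t = a := by
  obtain ⟨s, hs⟩ := hPair a a
  exact ⟨s, fun t => by simp [hs t]⟩

lemma exists_insert (hPair : PairAx E) (hUnion : UnionAx E) (a b : X) :
    ∃ u, ∀ t, E t u ↔ E t a ∨ t = b := by
  obtain ⟨sb, hsb⟩ := exists_singleton hPair b
  obtain ⟨pr, hpr⟩ := hPair a sb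
  obtain ⟨u, hu⟩ := hUnion pr
  refine ⟨u, fun t => ?_⟩
  simp only [hu, hpr]
  constructor
  · rintro ⟨y, rfl | rfl, ht⟩
    exacts [Or.inl ht, Or.inr ((hsb t).1 ht)]
  · rintro (ht | rfl)
    exacts [⟨a, Or.inl rfl, ht⟩, ⟨sb, Or.inr rfl, (hsb t).2 rfl⟩]

lemma exists_isPair_s5 (hExt : ExtensionalityAx E) (hPair : PairAx E) (a b : X) :
    ∃ q, IsPair E q a b := by
  obtain ⟨sa, hsa⟩ := exists_singleton hPair a
  obtain ⟨pab, hpab⟩ := hPair a b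
  obtain ⟨q, hq⟩ := hPair sa pab
  refine ⟨q, fun z => ?_⟩
  rw [hq z]
  constructor
  · rintro (rfl | rfl)
    exacts [Or.inl hsa, Or.inr hpab]
  · rintro (h | h)
    · exact Or.inl (hExt z sa fun t => (h t).trans (hsa t).symm)
    · exact Or.inr (hExt z pab fun t => (h t).trans (hpab t).symm)

lemma IsPair.fst_mem_and_sub_of_mem {q a b z : X} (hp : IsPair E q a b) (hz : E z q) :
    E a z ∧ ∀ t, E t z → t = a ∨ t = b := by
  rcases (hp z).1 hz with h | h
  · exact ⟨(h a).2 rfl, fun t ht => Or.inl ((h t).1 ht)⟩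
  · exact ⟨(h a).2 (Or.inl rfl), fun t ht => (h t).1 ht⟩

lemma IsPair.exists_mem_mem (hPair : PairAx E) {q a b : X} (hp : IsPair E q a b) :
    ∃ c, E c q ∧ E a c ∧ E b c := by
  obtain ⟨c, hc⟩ := hPair a b
  exact ⟨c, (hp c).2 (Or.inr hc), (hc a).2 (Or.inl rfl), (hc b).2 (Or.inr rfl)⟩

lemma IsPair.inj_s5 (hPair : PairAx E) {q a b a' b' : X} (h : IsPair E q a b)
    (h' : IsPair E q a' b') : a = a' ∧ b = b' := by
  obtain ⟨s', hs'⟩ := exists_singleton hPair a'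
  have ha : a = a' := (hs' a).1 (h.fst_mem_and_sub_of_mem ((h' s').2 (Or.inl hs'))).1
  obtain ⟨c, hcq, -, hbc⟩ := h.exists_mem_mem hPair
  obtain ⟨c', hcq', -, hbc'⟩ := h'.exists_mem_mem hPair
  have hb := (h'.fst_mem_and_sub_of_mem hcq).2 b hbc
  have hb' := (h.fst_mem_and_sub_of_mem hcq').2 b' hbc'
  subst ha
  refine ⟨rfl, ?_⟩
  rcases hb with hb | hb
  · rcases hb' with hb' | hb'
    exacts [hb.trans hb'.symm, hb'.symm]
  · exact hb

lemma irrefl_of_setFoundation (hPair : PairAx E) (hFound : SetFoundationAx E) (x : X) :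
    ¬ E x x := by
  intro hxx
  obtain ⟨s, hs⟩ := exists_singleton hPair x
  obtain ⟨y, hy, hmin⟩ := hFound s ⟨x, (hs x).2 rfl⟩
  obtain rfl := (hs y).1 hy
  exact hmin y hxx hy

lemma asymm_of_setFoundation (hPair : PairAx E) (hFound : SetFoundationAx E) {a b : X}
    (hab : E a b) : ¬ E b a := by
  intro hba
  obtain ⟨s, hs⟩ := hPair a b
  obtain ⟨y, hy, hmin⟩ := hFound s ⟨a, (hs a).2 (Or.inl rfl)⟩
  rcases (hs y).1 hy with rfl | rfl
  exacts [hmin b hba ((hs b).2 (Or.inr rfl)), hmin a hab ((hs a).2 (Or.inl rfl))]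

end SetBasics

section PairFormula

variable {E : X → X → Prop} {m : ℕ}

def isSingletonF (c a : Fin m) : SF m :=
  .and (.ballMem c (.eq (Fin.last m) a.castSucc)) (.mem a c)

def isDoubletonF (c a b : Fin m) : SF m :=
  .and (.mem a c) (.and (.mem b c)
    (.ballMem c (.or (.eq (Fin.last m) a.castSucc) (.eq (Fin.last m) b.castSucc))))

def isPairF (q a b : Fin m) : SF m :=
  .and (.bexMem q (isSingletonF (Fin.last m) a.castSucc))
    (.and (.bexMem q (isDoubletonF (Fin.last m) a.castSucc b.castSucc))
      (.ballMem q (.or (isSingletonF (Fin.last m) a.castSucc)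
        (isDoubletonF (Fin.last m) a.castSucc b.castSucc))))

lemma isSingletonF_eval (c a : Fin m) (v : Fin m → X) :
    (isSingletonF c a).Eval E v ↔ ∀ t, E t (v c) ↔ t = v a := by
  simp only [isSingletonF, SF.Eval, Fin.snoc_last, Fin.snoc_castSucc]
  exact ⟨fun ⟨h, ha⟩ t => ⟨h t, (· ▸ ha)⟩, fun h => ⟨fun t => (h t).1, (h _).2 rfl⟩⟩

lemma isDoubletonF_eval (c a b : Fin m) (v : Fin m → X) :
    (isDoubletonF c a b).Eval E v ↔ ∀ t, E t (v c) ↔ t = v a ∨ t = v b := by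
  simp only [isDoubletonF, SF.Eval, Fin.snoc_last, Fin.snoc_castSucc]
  refine ⟨fun ⟨ha, hb, h⟩ t => ⟨h t, ?_⟩, fun h => ⟨(h _).2 (.inl rfl), (h _).2 (.inr rfl),
    fun t => (h t).1⟩⟩
  rintro (rfl | rfl)
  exacts [ha, hb]

lemma isPairF_eval (hExt : ExtensionalityAx E) (hPair : PairAx E) (q a b : Fin m)
    (v : Fin m → X) : (isPairF q a b).Eval E v ↔ IsPair E (v q) (v a) (v b) := by
  simp only [isPairF, SF.Eval, isSingletonF_eval, isDoubletonF_eval, Fin.snoc_last,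
    Fin.snoc_castSucc]
  constructor
  · rintro ⟨⟨s, hsq, hs⟩, ⟨c, hcq, hc⟩, hall⟩ z
    refine ⟨hall z, ?_⟩
    rintro (h | h)
    · rwa [hExt z s fun t => (h t).trans (hs t).symm]
    · rwa [hExt z c fun t => (h t).trans (hc t).symm]
  · intro hp
    obtain ⟨s, hs⟩ := exists_singleton hPair (v a)
    obtain ⟨c, hc⟩ := hPair (v a) (v b)
    exact ⟨⟨s, (hp s).2 (Or.inl hs), hs⟩, ⟨c, (hp c).2 (Or.inr hc), hc⟩, fun z => (hp z).1⟩

lemma isPairF_isDelta0 (q a b : Fin m) : (isPairF q a b).IsDelta0 := by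
  simp [isPairF, isSingletonF, isDoubletonF, SF.IsDelta0]

lemma isPairF_isDelta0P (q a b : Fin m) : (isPairF q a b).IsDelta0P := by
  simp [isPairF, isSingletonF, isDoubletonF, SF.IsDelta0P]

/-- `∃ y v, q = ⟨y, v⟩ ∧ φ(y, v)`, bounded through a member `c ∋ y, v` of `q` that `φ` does not
see. -/
def exPairF (q : Fin m) (φ : SF (m + 2)) : SF m :=
  .bexMem q <| .bexMem (Fin.last m) <| .bexMem (Fin.last m).castSucc <|
    .and (isPairF q.castSucc.castSucc.castSucc (Fin.last (m + 1)).castSucc (Fin.last (m + 2)))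
      (φ.rename_s5 (Fin.last m).castSucc.castSucc.succAbove)

lemma snoc_comp_succAbove (v : Fin m → X) (c y z : X) :
    (Fin.snoc (Fin.snoc (Fin.snoc v c) y) z : Fin (m + 3) → X) ∘
        (Fin.last m).castSucc.castSucc.succAbove = Fin.snoc (Fin.snoc v y) z := by
  funext i
  refine Fin.lastCases ?_ (fun i => Fin.lastCases ?_ (fun i => ?_) i) i
  · simp
  · simp [Fin.succAbove_of_le_castSucc, Fin.succ_castSucc]
  · simp [Fin.succAbove_of_castSucc_lt]

lemma exPairF_eval (hExt : ExtensionalityAx E) (hPair : PairAx E) (q : Fin m) (φ : SF (m + 2))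
    (v : Fin m → X) : (exPairF q φ).Eval E v ↔
      ∃ y z, IsPair E (v q) y z ∧ φ.Eval E (Fin.snoc (Fin.snoc v y) z) := by
  simp only [exPairF, SF.Eval, isPairF_eval hExt hPair, SF.eval_rename_s5, snoc_comp_succAbove,
    Fin.snoc_last, Fin.snoc_castSucc]
  constructor
  · rintro ⟨c, -, y, -, z, -, hp, hφ⟩
    exact ⟨y, z, hp, hφ⟩
  · rintro ⟨y, z, hp, hφ⟩
    obtain ⟨c, hc, hy, hz⟩ := hp.exists_mem_mem hPair
    exact ⟨c, hc, y, hy, z, hz, hp, hφ⟩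

lemma exPairF_isDelta0P {q : Fin m} {φ : SF (m + 2)} (hφ : φ.IsDelta0P) :
    (exPairF q φ).IsDelta0P :=
  ⟨isPairF_isDelta0P _ _ _, hφ.rename_s5 _⟩

end PairFormula

section Omega

def Delta0Definable (E : X → X → Prop) (S : X → Prop) : Prop :=
  ∃ (k : ℕ) (χ : SF (k + 1)) (p : Fin k → X), χ.IsDelta0 ∧ ∀ x, χ.Eval E (Fin.snoc p x) ↔ S x

variable {E : X → X → Prop}

lemma exists_sep (hSep : SeparationScheme E Delta0C) {S : X → Prop}
    (hS : Delta0Definable E S) (a : X) : ∃ s, ∀ x, E x s ↔ E x a ∧ S x := by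
  obtain ⟨k, χ, p, hχ, hχS⟩ := hS
  obtain ⟨s, hs⟩ := hSep k χ hχ p a
  exact ⟨s, fun x => (hs x).trans (and_congr_right' (hχS x))⟩

lemma delta0Definable_transSet : Delta0Definable E (TransSet E) :=
  ⟨0, .ballMem 0 (.ballMem 1 (.mem 2 0)), Fin.elim0, by simp [SF.IsDelta0],
    fun x => by simp [SF.Eval, TransSet, Fin.snoc]⟩

lemma delta0Definable_subE (w : X) : Delta0Definable E (SubE E · w) :=
  ⟨1, .ballMem 1 (.mem 2 0), fun _ => w, by simp [SF.IsDelta0],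
    fun x => by simp [SF.Eval, SubE, Fin.snoc]⟩

lemma delta0Definable_mem_or_eq_of_subE (w : X) :
    Delta0Definable E fun x => ∀ d, E d w → SubE E d x → E d x ∨ d = x :=
  ⟨1, .ballMem 0 (.or (.not (.ballMem 2 (.mem 3 1))) (.or (.mem 2 1) (.eq 2 1))), fun _ => w,
    by simp [SF.IsDelta0], fun x => by simp [SF.Eval, SubE, Fin.snoc, imp_iff_not_or]⟩

lemma delta0Definable_trichotomous (w : X) :
    Delta0Definable E fun y => ∀ x, E x w → E x y ∨ x = y ∨ E y x :=
  ⟨1, .ballMem 0 (.or (.mem 2 1) (.or (.eq 2 1) (.mem 1 2))), fun _ => w, by simp [SF.IsDelta0],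
    fun x => by simp [SF.Eval, Fin.snoc]⟩

lemma delta0Definable_empty_or_succ :
    Delta0Definable E fun x => (∀ z, ¬ E z x) ∨ ∃ t, E t x ∧ SuccOf E t x :=
  ⟨0, .or (.ballMem 0 (.not (.eq 1 1)))
      (.bexMem 0 (.and (.ballMem 0 (.or (.mem 2 1) (.eq 2 1))) (.ballMem 1 (.mem 2 0)))),
    Fin.elim0, by simp [SF.IsDelta0],
    fun x => by
      simp only [SF.Eval, SuccOf]
      refine or_congr (by simp [Fin.snoc])
        (exists_congr fun t => and_congr_right fun ht => ⟨?_, ?_⟩)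
      · exact fun ⟨h1, h2⟩ z => ⟨h1 z, fun h => h.elim (h2 z) (· ▸ ht)⟩
      · exact fun h => ⟨fun z => (h z).1, fun z hz => (h z).2 (Or.inl hz)⟩⟩

variable {w : X}

lemma IsOmega.induction_s5 (hw : IsOmega E w) (hSep : SeparationScheme E Delta0C)
    {S : X → Prop} (hS : Delta0Definable E S) (zero : ∀ e, E e w → (∀ z, ¬ E z e) → S e)
    (succ : ∀ x s, E x w → E s w → SuccOf E x s → S x → S s) : ∀ x, E x w → S x := by
  obtain ⟨s₀, hs₀⟩ := exists_sep hSep hS w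
  have hind : InductiveSet E s₀ := by
    obtain ⟨e, hew, he⟩ := hw.1.1
    refine ⟨⟨e, (hs₀ e).2 ⟨hew, zero e hew he⟩, he⟩, fun x hx => ?_⟩
    obtain ⟨hxw, hxS⟩ := (hs₀ x).1 hx
    obtain ⟨s, hsw, hsucc⟩ := hw.1.2 x hxw
    exact ⟨s, (hs₀ s).2 ⟨hsw, succ x s hxw hsw hsucc hxS⟩, hsucc⟩
  exact fun x hx => ((hs₀ x).1 (hw.2 s₀ hind x hx)).2

lemma IsOmega.transSet_of_mem_s5 (hw : IsOmega E w) (hSep : SeparationScheme E Delta0C) :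
    ∀ x, E x w → TransSet E x :=
  hw.induction_s5 hSep delta0Definable_transSet (fun _ _ he y hy => absurd hy (he y))
    fun _ _ _ _ hsucc ha y hys z hzy =>
      (hsucc z).2 <| Or.inl <| ((hsucc y).1 hys).elim (ha y · z hzy) (· ▸ hzy)

lemma IsOmega.transSet (hw : IsOmega E w) (hSep : SeparationScheme E Delta0C) :
    TransSet E w :=
  hw.induction_s5 hSep (delta0Definable_subE w) (fun _ _ he z hz => absurd hz (he z))
    fun _ _ haw _ hsucc ha z hz => ((hsucc z).1 hz).elim (ha z) (· ▸ haw)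

lemma IsOmega.mem_or_eq_of_subE (hw : IsOmega E w) (hExt : ExtensionalityAx E)
    (hSep : SeparationScheme E Delta0C) :
    ∀ x, E x w → ∀ d, E d w → SubE E d x → E d x ∨ d = x := by
  refine hw.induction_s5 hSep (delta0Definable_mem_or_eq_of_subE w) ?_ ?_
  · exact fun e _ he d _ hde =>
      Or.inr (hExt d e fun z => ⟨hde z, fun hz => absurd hz (he z)⟩)
  · intro a s _ _ hsucc ha d hd hds
    by_cases had : E a d
    · refine Or.inr (hExt d s fun z => ⟨hds z, fun hz => ?_⟩)
      rcases (hsucc z).1 hz with hza | rfl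
      exacts [hw.transSet_of_mem_s5 hSep d hd a had z hza, had]
    · have hda : SubE E d a := fun z hz =>
        ((hsucc z).1 (hds z hz)).resolve_right fun h => had (h ▸ hz)
      rcases ha d hd hda with h | rfl
      exacts [Or.inl ((hsucc d).2 (Or.inl h)), Or.inl ((hsucc d).2 (Or.inr rfl))]

lemma IsOmega.trichotomous (hw : IsOmega E w) (hExt : ExtensionalityAx E)
    (hSep : SeparationScheme E Delta0C) :
    ∀ y, E y w → ∀ x, E x w → E x y ∨ x = y ∨ E y x := by
  refine hw.induction_s5 hSep (delta0Definable_trichotomous w) ?_ ?_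
  · intro e hew he x hxw
    rcases hw.mem_or_eq_of_subE hExt hSep x hxw e hew fun z hz => absurd hz (he z) with h | rfl
    exacts [Or.inr (Or.inr h), Or.inr (Or.inl rfl)]
  · intro a s _ hsw hsucc ha x hxw
    rcases ha x hxw with h | rfl | h
    · exact Or.inl ((hsucc x).2 (Or.inl h))
    · exact Or.inl ((hsucc x).2 (Or.inr rfl))
    · have hsx : SubE E s x := fun z hz =>
        ((hsucc z).1 hz).elim (hw.transSet_of_mem_s5 hSep x hxw a h z) (· ▸ h)
      rcases hw.mem_or_eq_of_subE hExt hSep x hxw s hsw hsx with h' | rfl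
      exacts [Or.inr (Or.inr h'), Or.inr (Or.inl rfl)]

lemma IsOmega.empty_or_succ (hw : IsOmega E w) (hSep : SeparationScheme E Delta0C) :
    ∀ x, E x w → (∀ z, ¬ E z x) ∨ ∃ t, E t x ∧ SuccOf E t x :=
  hw.induction_s5 hSep delta0Definable_empty_or_succ (fun _ _ he => Or.inl he)
    fun a _ _ _ hsucc _ => Or.inr ⟨a, (hsucc a).2 (Or.inr rfl), hsucc⟩

lemma IsOmega.mem_of_not_mem_succ (hw : IsOmega E w) (hExt : ExtensionalityAx E)
    (hSep : SeparationScheme E Delta0C) {x₀ x₁ y : X} (hx₁ : E x₁ w) (hy : E y w)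
    (hsucc : SuccOf E x₁ x₀) (hyx : ¬ E y x₀) : E x₁ y := by
  rcases hw.trichotomous hExt hSep x₁ hx₁ y hy with h | rfl | h
  exacts [absurd ((hsucc y).2 (Or.inl h)) hyx, absurd ((hsucc y).2 (Or.inr rfl)) hyx, h]

end Omega

section Reversal

def ReversesInto (E : X → X → Prop) (g : X) (A : X → Prop) (d : X) : Prop :=
  (∀ q, E q g → ∃ y v, IsPair E q y v ∧ A y ∧ E v d) ∧
  (∀ y, A y → ∃ q v, E q g ∧ IsPair E q y v) ∧
  ∀ q q' y v y' v', E q g → E q' g → IsPair E q y v → IsPair E q' y' v' → (E y y' ↔ E v' v)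

variable {E : X → X → Prop}

lemma delta0Definable_mem_twice (hExt : ExtensionalityAx E) (hPair : PairAx E) (g : X) :
    Delta0Definable E fun y =>
      ∃ q v q' u, E q g ∧ E q' g ∧ IsPair E q y v ∧ IsPair E q' v u ∧ E u y := by
  refine ⟨1, .bexMem 0 (.bexMem 2 (.bexMem 3 (.bexMem 0 (.bexMem 5 (.bexMem 6
    (.and (isPairF 2 1 4) (.and (isPairF 5 4 7) (.mem 7 1)))))))), fun _ => g,
    by simp [SF.IsDelta0, isPairF_isDelta0], fun y => ?_⟩
  simp only [SF.Eval, isPairF_eval hExt hPair]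
  constructor
  · rintro ⟨q, hq, c, -, v, -, q', hq', c', -, u, -, hp, hp', huy⟩
    exact ⟨q, v, q', u, hq, hq', hp, hp', huy⟩
  · rintro ⟨q, v, q', u, hq, hq', hp, hp', huy⟩
    obtain ⟨c, hc, -, hv⟩ := hp.exists_mem_mem hPair
    obtain ⟨c', hc', -, hu⟩ := hp'.exists_mem_mem hPair
    exact ⟨q, hq, c, hc, v, hv, q', hq', c', hc', u, hu, hp, hp', huy⟩

/-- `g ∘ g` preserves `∈` and maps `P` into `P`; an `∈`-minimal `y` with `g (g y) ∈ y` then has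
`g (g y)` as a smaller one. -/
lemma not_reversesInto_of_mem (hExt : ExtensionalityAx E) (hPair : PairAx E)
    (hSep : SeparationScheme E Delta0C) (hFound : SetFoundationAx E) {P d g : X}
    (hP : TransSet E P) (hdP : E d P) : ¬ ReversesInto E g (E · P) d := by
  rintro ⟨hdom, htot, hrev⟩
  have hval : ∀ y, E y P → ∃ q v, E q g ∧ IsPair E q y v ∧ E v d := by
    intro y hy
    obtain ⟨q, v, hq, hp⟩ := htot y hy
    obtain ⟨y', v', hp', -, hv'⟩ := hdom q hq
    obtain ⟨-, rfl⟩ := hp.inj_s5 hPair hp'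
    exact ⟨q, v, hq, hp, hv'⟩
  obtain ⟨s, hs⟩ := exists_sep hSep (delta0Definable_mem_twice hExt hPair g) P
  have hds : E d s := by
    obtain ⟨q, v, hq, hp, hvd⟩ := hval d hdP
    obtain ⟨q', u, hq', hp', hud⟩ := hval v (hP d hdP v hvd)
    exact (hs d).2 ⟨hdP, q, v, q', u, hq, hq', hp, hp', hud⟩
  obtain ⟨y, hys, hmin⟩ := hFound s ⟨d, hds⟩
  obtain ⟨-, q, v, q', u, hq, hq', hp, hp', huy⟩ := (hs y).1 hys
  have huP : E u P := by
    obtain ⟨v', u', hp'', -, hu'⟩ := hdom q' hq'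
    obtain ⟨-, rfl⟩ := hp'.inj_s5 hPair hp''
    exact hP d hdP u hu'
  obtain ⟨qu, vu, hqu, hpu, hvu⟩ := hval u huP
  obtain ⟨qv, uv, hqv, hpv, -⟩ := hval vu (hP d hdP vu hvu)
  have hvvu : E v vu := (hrev qu q u vu y v hqu hq hpu hp).1 huy
  have huvu : E uv u := (hrev q' qv v u vu uv hq' hqv hp' hpv).1 hvvu
  exact hmin u huy ((hs u).2 ⟨huP, qu, vu, qv, uv, hqu, hqv, hpu, hpv, huvu⟩)

end Reversal

section Countdown

def Witnesses (E : X → X → Prop) (Ψ : X → X → Prop) (f d : X) : Prop :=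
  ∀ y, E y d → ∃ q v, E q f ∧ IsPair E q y v ∧ ¬ Ψ y v

/-- `x` lies in this class when some `d ∈ ω` with `P - x ≤ d` (witnessed by the `∈`-reversing
`g`) has all of `d ∪ {d}` outside the class `{y | ∀ v, Ψ y v}`, witnessed by `f` and `z`. -/
def Countdown (E : X → X → Prop) (Ψ : X → X → Prop) (w P x : X) : Prop :=
  ∃ g f z d, E d w ∧ ¬ Ψ d z ∧ Witnesses E Ψ f d ∧ ReversesInto E g (fun y => E y P ∧ ¬ E y x) d

def HasNoLeast (E : X → X → Prop) (w : X) (S : X → Prop) : Prop :=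
  ∀ y, E y w → S y → ∃ x, E x w ∧ S x ∧ E x y

variable {E : X → X → Prop} {Ψ : X → X → Prop} {w P : X}

lemma countdown_self (hw : IsOmega E w) (hS : HasNoLeast E w fun y => ∀ v, Ψ y v) :
    Countdown E Ψ w P P := by
  obtain ⟨e, hew, he⟩ := hw.1.1
  obtain ⟨z, hz⟩ : ∃ z, ¬ Ψ e z := not_forall.1 fun h => by
    obtain ⟨x, -, -, hx⟩ := hS e hew h
    exact he x hx
  exact ⟨e, e, z, e, hew, hz, fun y hy => absurd hy (he y), fun q hq => absurd hq (he q),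
    fun y hy => absurd hy.1 hy.2, fun q _ _ _ _ _ hq => absurd hq (he q)⟩

lemma Witnesses.insert {f f' d d' z Q : X} (hf : Witnesses E Ψ f d) (hz : ¬ Ψ d z)
    (hQ : IsPair E Q d z) (hf' : ∀ t, E t f' ↔ E t f ∨ t = Q) (hd : SuccOf E d d') :
    Witnesses E Ψ f' d' := by
  intro y hy
  rcases (hd y).1 hy with hy | rfl
  · obtain ⟨q, v, hq, hp, hv⟩ := hf y hy
    exact ⟨q, v, (hf' q).2 (Or.inl hq), hp, hv⟩
  · exact ⟨Q, z, (hf' Q).2 (Or.inr rfl), hQ, hz⟩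

lemma ReversesInto.insert (hPair : PairAx E) (hFound : SetFoundationAx E)
    {g g' x₀ x₁ d d' Q : X} (hg : ReversesInto E g (fun y => E y P ∧ ¬ E y x₀) d)
    (hx : SuccOf E x₁ x₀) (hd : SuccOf E d d') (hx₁P : E x₁ P)
    (hbelow : ∀ y, E y P → ¬ E y x₀ → E x₁ y)
    (hQ : IsPair E Q x₁ d) (hg' : ∀ t, E t g' ↔ E t g ∨ t = Q) :
    ReversesInto E g' (fun y => E y P ∧ ¬ E y x₁) d' := by
  obtain ⟨hdom, htot, hrev⟩ := hg
  have hold : ∀ q y v, E q g → IsPair E q y v → E y P ∧ ¬ E y x₀ ∧ E v d := by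
    intro q y v hq hp
    obtain ⟨y', v', hp', ⟨hy'P, hy'x⟩, hv'⟩ := hdom q hq
    obtain ⟨rfl, rfl⟩ := hp.inj_s5 hPair hp'
    exact ⟨hy'P, hy'x, hv'⟩
  refine ⟨fun q hq => ?_, fun y ⟨hyP, hyx₁⟩ => ?_, fun q q' y v y' v' hq hq' hp hp' => ?_⟩
  · rcases (hg' q).1 hq with hq | rfl
    · obtain ⟨y, v, hp, ⟨hyP, hyx⟩, hv⟩ := hdom q hq
      exact ⟨y, v, hp, ⟨hyP, fun h => hyx ((hx y).2 (Or.inl h))⟩, (hd v).2 (Or.inl hv)⟩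
    · exact ⟨x₁, d, hQ, ⟨hx₁P, irrefl_of_setFoundation hPair hFound x₁⟩, (hd d).2 (Or.inr rfl)⟩
  · by_cases hy : y = x₁
    · exact ⟨Q, d, (hg' Q).2 (Or.inr rfl), hy ▸ hQ⟩
    · obtain ⟨q, v, hq, hp⟩ := htot y ⟨hyP, fun h => ((hx y).1 h).elim hyx₁ hy⟩
      exact ⟨q, v, (hg' q).2 (Or.inl hq), hp⟩
  · rcases (hg' q).1 hq with hq | rfl <;> rcases (hg' q').1 hq' with hq' | rfl
    · exact hrev q q' y v y' v' hq hq' hp hp'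
    · obtain ⟨rfl, rfl⟩ := hp'.inj_s5 hPair hQ
      obtain ⟨-, hyx, hvd⟩ := hold q y v hq hp
      exact iff_of_false (fun h => hyx ((hx y).2 (Or.inl h)))
        (asymm_of_setFoundation hPair hFound hvd)
    · obtain ⟨rfl, rfl⟩ := hp.inj_s5 hPair hQ
      obtain ⟨hy'P, hy'x, hv'd⟩ := hold q' y' v' hq' hp'
      exact iff_of_true (hbelow y' hy'P hy'x) hv'd
    · obtain ⟨rfl, rfl⟩ := hp.inj_s5 hPair hQ
      obtain ⟨rfl, rfl⟩ := hp'.inj_s5 hPair hQ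
      exact iff_of_false (irrefl_of_setFoundation hPair hFound _)
        (irrefl_of_setFoundation hPair hFound _)

lemma Countdown.of_succ (hM : ModelMminus E) (hw : IsOmega E w) (hPw : E P w)
    (hS : HasNoLeast E w fun y => ∀ v, Ψ y v) {x₀ x₁ : X} (hx₁P : E x₁ P)
    (hsucc : SuccOf E x₁ x₀) (h : Countdown E Ψ w P x₀) : Countdown E Ψ w P x₁ := by
  obtain ⟨hExt, -, hPair, hUnion, -, -, -, hSep, hFound⟩ := hM
  obtain ⟨g, f, z, d, hdw, hz, hf, hg⟩ := h
  obtain ⟨d', hd'w, hd⟩ := hw.1.2 d hdw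
  obtain ⟨z', hz'⟩ : ∃ z', ¬ Ψ d' z' := not_forall.1 fun hd' => by
    obtain ⟨y, -, hy, hyd'⟩ := hS d' hd'w hd'
    rcases (hd y).1 hyd' with hyd | rfl
    · obtain ⟨q, v, -, -, hv⟩ := hf y hyd
      exact hv (hy v)
    · exact hz (hy z)
  obtain ⟨Q, hQ⟩ := exists_isPair_s5 hExt hPair d z
  obtain ⟨f', hf'⟩ := exists_insert hPair hUnion f Q
  obtain ⟨Q', hQ'⟩ := exists_isPair_s5 hExt hPair x₁ d
  obtain ⟨g', hg'⟩ := exists_insert hPair hUnion g Q'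
  have hmemw : ∀ y, E y P → E y w := hw.transSet hSep P hPw
  have hbelow : ∀ y, E y P → ¬ E y x₀ → E x₁ y := fun y hy =>
    hw.mem_of_not_mem_succ hExt hSep (hmemw x₁ hx₁P) (hmemw y hy) hsucc
  exact ⟨g', f', z', d', hd'w, hz', hf.insert hz hQ hf' hd,
    hg.insert hPair hFound hsucc hd hx₁P hbelow hQ' hg'⟩

lemma Countdown.not_of_empty (hM : ModelMminus E) (hw : IsOmega E w) (hPw : E P w)
    (hP : ∀ v, Ψ P v) {x : X} (hx : ∀ t, ¬ E t x) : ¬ Countdown E Ψ w P x := by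
  obtain ⟨hExt, -, hPair, -, -, -, -, hSep, hFound⟩ := hM
  rintro ⟨g, f, z, d, hdw, hz, hf, hg⟩
  rcases hw.trichotomous hExt hSep P hPw d hdw with hdP | rfl | hPd
  · have hA : (fun y => E y P ∧ ¬ E y x) = (E · P) := funext fun y => by simp [hx y]
    exact not_reversesInto_of_mem hExt hPair hSep hFound (hw.transSet_of_mem_s5 hSep P hPw) hdP
      (hA ▸ hg)
  · exact hz (hP z)
  · obtain ⟨q, v, -, -, hv⟩ := hf P hPd
    exact hv (hP v)

lemma Countdown.exists_mem (hM : ModelMminus E) (hw : IsOmega E w) (hPw : E P w) {x₀ : X}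
    (hx₀w : E x₀ w) (h : Countdown E Ψ w P x₀) (hP : ∀ v, Ψ P v)
    (hS : HasNoLeast E w fun y => ∀ v, Ψ y v) :
    ∃ x₁, E x₁ w ∧ Countdown E Ψ w P x₁ ∧ E x₁ x₀ := by
  have ⟨hExt, _, _, _, _, _, _, hSep, _⟩ := hM
  by_cases hPx₀ : E P x₀
  · exact ⟨P, hPw, countdown_self hw hS, hPx₀⟩
  have hx₀P : ∀ t, E t x₀ → E t P := by
    rcases hw.trichotomous hExt hSep P hPw x₀ hx₀w with h | rfl | h
    exacts [hw.transSet_of_mem_s5 hSep P hPw x₀ h, fun _ => id, absurd h hPx₀]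
  rcases hw.empty_or_succ hSep x₀ hx₀w with hx₀ | ⟨x₁, hx₁, hsucc⟩
  · exact absurd h (Countdown.not_of_empty hM hw hPw hP hx₀)
  · exact ⟨x₁, hw.transSet hSep x₀ hx₀w x₁ hx₁, h.of_succ hM hw hPw hS (hx₀P x₁ hx₁) hsucc, hx₁⟩

end Countdown

section CountdownFormula

variable {E : X → X → Prop}

/- Variables: `p` at `0, …, n-1`, then `P, w, x, u, a, g, f, z, d` at `n, …, n+8`. The one
unbounded quantifier `∃ u` of `countdownF` bounds `a`, which bounds the witnesses `g, f, z`. -/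
def countdownMatrixF (n : ℕ) (ψ : SF (n + 2)) : SF (n + 9) :=
  .and (.not (ψ.rename_s5 (pinRen (by omega) (idx (n + 8)) (idx (n + 7))))) <|
  .and (.ballMem (idx (n + 8)) <| .bexMem (idx (n + 6)) <| exPairF (idx (n + 10)) <|
    .and (.eq (idx (n + 11)) (idx (n + 9)))
      (.not (ψ.rename_s5 (pinRen (by omega) (idx (n + 11)) (idx (n + 12)))))) <|
  .and (.ballMem (idx (n + 5)) <| exPairF (idx (n + 9)) <|
    .and (.mem (idx (n + 10)) (idx n)) <|
    .and (.not (.mem (idx (n + 10)) (idx (n + 2)))) (.mem (idx (n + 11)) (idx (n + 8)))) <|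
  .and (.ballMem (idx n) <| .or (.mem (idx (n + 9)) (idx (n + 2))) <|
    .bexMem (idx (n + 5)) <| exPairF (idx (n + 10)) (.eq (idx (n + 11)) (idx (n + 9))))
  (.ballMem (idx (n + 5)) <| .ballMem (idx (n + 5)) <| .not <|
    exPairF (idx (n + 9)) <| exPairF (idx (n + 10)) <|
    .not (iffF (.mem (idx (n + 11)) (idx (n + 13))) (.mem (idx (n + 14)) (idx (n + 12)))))

def countdownF (n : ℕ) (ψ : SF (n + 2)) : SF (n + 3) :=
  .ex <| .bexMem (idx (n + 3)) <| .bexMem (idx (n + 4)) <| .bexMem (idx (n + 4)) <|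
    .bexMem (idx (n + 4)) <| .bexMem (idx (n + 1)) <| countdownMatrixF n ψ

lemma exists_packed (hPair : PairAx E) (hUnion : UnionAx E) (Φ : X → X → X → Prop) :
    (∃ u a, E a u ∧ ∃ g, E g a ∧ ∃ f, E f a ∧ ∃ z, E z a ∧ Φ g f z) ↔ ∃ g f z, Φ g f z := by
  refine ⟨fun ⟨_, _, _, g, _, f, _, z, _, h⟩ => ⟨g, f, z, h⟩, fun ⟨g, f, z, h⟩ => ?_⟩
  obtain ⟨t, ht⟩ := hPair g f
  obtain ⟨a, ha⟩ := exists_insert hPair hUnion t z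
  obtain ⟨u, hu⟩ := exists_singleton hPair a
  exact ⟨u, a, (hu a).2 rfl, g, (ha g).2 (Or.inl ((ht g).2 (Or.inl rfl))),
    f, (ha f).2 (Or.inl ((ht f).2 (Or.inr rfl))), z, (ha z).2 (Or.inr rfl), h⟩

lemma countdownF_eval (hM : ModelMminus E) {n : ℕ} (ψ : SF (n + 2)) (p : Fin n → X)
    (P w x : X) :
    (countdownF n ψ).Eval E (Fin.snoc (Fin.snoc (Fin.snoc p P) w) x) ↔
      Countdown E (fun y v => ψ.Eval E (Fin.snoc (Fin.snoc p y) v)) w P x := by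
  obtain ⟨hExt, -, hPair, hUnion, -⟩ := hM
  simp only [countdownF, countdownMatrixF, SF.Eval, exPairF_eval hExt hPair, iffF_eval,
    SF.eval_rename_s5, comp_pinRen]
  simp (disch := omega) only [Fin.snoc_mk_of_lt, Fin.snoc_mk_of_eq, Fin.snoc_comp_castLE,
    Fin.castLE_rfl, Function.comp_id]
  rw [exists_packed hPair hUnion]
  simp only [Countdown, Witnesses, ReversesInto, and_assoc, not_exists, not_and, not_not]
  refine exists_congr fun g => exists_congr fun f => exists_congr fun z => exists_congr fun d =>
    and_congr_right' <| and_congr_right' <| and_congr ?_ <| and_congr_right' <| and_congr ?_ ?_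
  · refine forall₂_congr fun y _ => ⟨?_, fun ⟨q, v, hq, hp, hv⟩ => ⟨q, hq, y, v, hp, rfl, hv⟩⟩
    rintro ⟨q, hq, y, v, hp, rfl, hv⟩
    exact ⟨q, v, hq, hp, hv⟩
  · refine forall_congr' fun y => ⟨fun h hy => ?_, fun h hyP => ?_⟩
    · obtain ⟨q, hq, y, v, hp, rfl⟩ := (h hy.1).resolve_left hy.2
      exact ⟨q, v, hq, hp⟩
    · by_cases hyx : E y x
      · exact Or.inl hyx
      · obtain ⟨q, v, hq, hp⟩ := h ⟨hyP, hyx⟩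
        exact Or.inr ⟨q, hq, y, v, hp, rfl⟩
  · exact ⟨fun h q q' y v y' v' hq hq' hp hp' => h q hq q' hq' y v hp y' v' hp',
      fun h q hq q' hq' y v hp y' v' hp' => h q q' y v y' v' hq hq' hp hp'⟩

lemma countdownF_sigma1P {n : ℕ} {ψ : SF (n + 2)} (hψ : ψ.IsDelta0P) :
    Sigma1PC _ (countdownF n ψ) :=
  ⟨_, by
    repeat' first | exact hψ.rename_s5 _ | apply exPairF_isDelta0P | constructor, rfl⟩

end CountdownFormula

/-- over `M⁻`, `Σ₁^𝒫`-Foundation on `ω` implies `Π₁^𝒫`-Foundation on `ω`. -/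
theorem pi1P_foundation_omega_of_sigma1P (X : Type u) (E : X → X → Prop)
    (hM : ModelMminus E) (w : X) (hw : IsOmega E w)
    (hSi : ∀ (n : ℕ) (φ : SF (n + 1)), Sigma1PC _ φ → ∀ p : Fin n → X,
      (∃ x, E x w ∧ φ.Eval E (Fin.snoc p x)) →
      ∃ y, E y w ∧ φ.Eval E (Fin.snoc p y) ∧
        ∀ x, E x w → φ.Eval E (Fin.snoc p x) → ¬ E x y) :
    ∀ (n : ℕ) (φ : SF (n + 1)), Pi1PC _ φ → ∀ p : Fin n → X,
      (∃ x, E x w ∧ φ.Eval E (Fin.snoc p x)) →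
      ∃ y, E y w ∧ φ.Eval E (Fin.snoc p y) ∧
        ∀ x, E x w → φ.Eval E (Fin.snoc p x) → ¬ E x y := by
  rintro n _ ⟨ψ, hψ, rfl⟩ p ⟨P, hPw, hP⟩
  by_contra! hS
  have hC := countdownF_eval hM ψ p P w
  obtain ⟨x₀, hx₀w, hx₀, hmin⟩ := hSi _ _ (countdownF_sigma1P hψ) _
    ⟨P, hPw, (hC P).2 (countdown_self hw hS)⟩
  obtain ⟨x₁, hx₁w, hx₁, hx₁x₀⟩ := ((hC x₀).1 hx₀).exists_mem hM hw hPw hx₀w hP hS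
  exact hmin x₁ hx₁w ((hC x₁).2 hx₁) hx₁x₀
end
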